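/- arXiv:2506.23860 — 14 statements merged into one kernel-verified Lean document; each statement's English description precedes it below -/
import Mathlib

section
/- Let 1 ≤ t ≤ k ≤ n and let C be a mixed Steiner system MS(t,k,Q) over Q = Z_{q_1} × ⋯ × Z_{q_n}. Then binom(k,t) · |C| = Σ_{Y ⊆ {1,…,n}, |Y| = t} Π_{j ∈ Y} (q_j − 1). -/
/-- A mixed Steiner system MS(t,k,Q) over the mixed alphabet
`Q = Z_{q i₁} × ⋯ × Z_{q iₙ}` (words are functions `x : ι → ℕ` with `x i < q i`):
a set `C` of words of Hamming weight `k` such that every word of Hamming weight `t`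
is at Hamming distance exactly `k - t` from exactly one codeword, and distinct
codewords are at Hamming distance at least `2(k-t)+1`. -/
def IsMixedSteiner {ι : Type*} [Fintype ι] [DecidableEq ι] (q : ι → ℕ) (t k : ℕ)
    (C : Set (ι → ℕ)) : Prop :=
  (∀ c ∈ C, (∀ i, c i < q i) ∧ hammingNorm c = k) ∧
  (∀ x : ι → ℕ, (∀ i, x i < q i) → hammingNorm x = t →
    ∃! c, c ∈ C ∧ hammingDist x c = k - t) ∧
  (∀ c ∈ C, ∀ c' ∈ C, c ≠ c' → 2 * (k - t) + 1 ≤ hammingDist c c')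

/-!
Double count the pairs `(x, c)` with `x ∈ Q` of weight `t`, `c ∈ C` and `d(x, c) = k - t`.
Each `x` lies in exactly one pair. For a codeword `c` of weight `k`, a word `x` satisfies
`d(x, c) = ‖c‖ - ‖x‖` exactly when `x` agrees with `c` on the support of `x`, i.e. `x` is `c` with
some coordinates replaced by `0`; the weight-`t` such words correspond to the `t`-subsets of the
support of `c`, so there are `binom(k, t)` of them. Finally, the words of weight `t` are counted by
their support `Y`: there are `∏_{j ∈ Y} (q_j - 1)` of them for each `Y`.
-/

open Finset Fintype

def AgreesOnSupport {ι β : Type*} [Zero β] (x c : ι → β) : Prop :=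
  ∀ i, x i ≠ 0 → x i = c i

theorem agreesOnSupport_piecewise {ι β : Type*} [DecidableEq ι] [Zero β] (c : ι → β)
    (S : Finset ι) : AgreesOnSupport (S.piecewise c 0) c := fun i hi => by
  by_cases hiS : i ∈ S <;> simp_all

section Support

variable {ι β : Type*} [Fintype ι] [Zero β] [DecidableEq β]

instance (x c : ι → β) : Decidable (AgreesOnSupport x c) :=
  inferInstanceAs (Decidable (∀ i, x i ≠ 0 → x i = c i))

def hammingSupport (x : ι → β) : Finset ι := {i | x i ≠ 0}

@[simp]
theorem mem_hammingSupport {x : ι → β} {i : ι} : i ∈ hammingSupport x ↔ x i ≠ 0 := by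
  simp [hammingSupport]

theorem card_hammingSupport (x : ι → β) : #(hammingSupport x) = hammingNorm x := rfl

theorem AgreesOnSupport.hammingSupport_subset {x c : ι → β} (h : AgreesOnSupport x c) :
    hammingSupport x ⊆ hammingSupport c := fun i hi => by
  rw [mem_hammingSupport] at hi ⊢
  exact h i hi ▸ hi

theorem hammingDist_eq_hammingNorm_sub_iff {x c : ι → β} :
    hammingDist x c = hammingNorm c - hammingNorm x ↔ AgreesOnSupport x c := by
  classical
  set D : Finset ι := {i | x i ≠ c i}
  change #D = #(hammingSupport c) - #(hammingSupport x) ↔ _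
  constructor
  · intro hD i hxi
    have hcover : hammingSupport c ⊆ D ∪ hammingSupport x := fun j hj => by
      by_cases hxc : x j = c j
      · simp_all
      · simp [D, hxc]
    -- `#supp c ≤ #(D ∪ supp x)` and `#D = #supp c - #supp x` leave no room for `D ∩ supp x`.
    have := card_le_card hcover
    have := card_union_add_card_inter D (hammingSupport x)
    have := card_le_card (inter_subset_left (s₁ := D) (s₂ := hammingSupport x))
    have hdisj : D ∩ hammingSupport x = ∅ := card_eq_zero.1 (by omega)
    by_contra hne
    have hi : i ∈ D ∩ hammingSupport x :=
      mem_inter.2 ⟨by simpa [D] using hne, mem_hammingSupport.2 hxi⟩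
    exact notMem_empty i (hdisj ▸ hi)
  · intro h
    have hD : D = hammingSupport c \ hammingSupport x := by
      ext i
      by_cases hxi : x i = 0
      · simp [D, hxi, eq_comm]
      · simp [D, h i hxi]
    rw [hD, card_sdiff_of_subset h.hammingSupport_subset]

variable [DecidableEq ι]

theorem AgreesOnSupport.piecewise_hammingSupport {x c : ι → β} (h : AgreesOnSupport x c) :
    (hammingSupport x).piecewise c 0 = x := by
  ext i
  by_cases hxi : x i = 0
  · simp [hxi]
  · rw [piecewise_eq_of_mem _ _ _ (mem_hammingSupport.2 hxi), h i hxi]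

theorem hammingSupport_piecewise {c : ι → β} {S : Finset ι} (hS : S ⊆ hammingSupport c) :
    hammingSupport (S.piecewise c 0) = S := by
  ext i
  by_cases hiS : i ∈ S
  · simpa [hiS] using hS hiS
  · simp [hiS]

theorem card_filter_agreesOnSupport {A : ι → Finset β} (h0 : ∀ i, 0 ∈ A i) {c : ι → β}
    (hc : c ∈ piFinset A) (t : ℕ) :
    #{x ∈ piFinset A | hammingNorm x = t ∧ AgreesOnSupport x c} = (hammingNorm c).choose t := by
  rw [← card_hammingSupport, ← card_powersetCard]
  refine card_nbij' hammingSupport (·.piecewise c 0) ?_ ?_ ?_ ?_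
  · intro x hx
    rw [mem_coe, mem_filter] at hx
    exact mem_powersetCard.2 ⟨hx.2.2.hammingSupport_subset, hx.2.1⟩
  · intro S hS
    obtain ⟨hSc, hSt⟩ := mem_powersetCard.1 hS
    rw [mem_coe, mem_filter, mem_piFinset]
    refine ⟨fun i => ?_, ?_, agreesOnSupport_piecewise c S⟩
    · by_cases hiS : i ∈ S <;> simp [hiS, h0, mem_piFinset.1 hc]
    · rw [← card_hammingSupport, hammingSupport_piecewise hSc, hSt]
  · intro x hx
    rw [mem_coe, mem_filter] at hx
    exact hx.2.2.piecewise_hammingSupport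
  · intro S hS
    exact hammingSupport_piecewise (mem_powersetCard.1 hS).1

theorem filter_hammingSupport_eq_piFinset {A : ι → Finset β} (h0 : ∀ i, 0 ∈ A i)
    (Y : Finset ι) :
    {x ∈ piFinset A | hammingSupport x = Y} =
      piFinset fun i => if i ∈ Y then (A i).erase 0 else {0} := by
  ext x
  simp only [mem_filter, mem_piFinset, Finset.ext_iff, mem_hammingSupport]
  refine ⟨fun ⟨hA, hY⟩ i => ?_, fun h => ⟨fun i => ?_, fun i => ?_⟩⟩
  · by_cases hiY : i ∈ Y
    · simp [hiY, hA i, (hY i).2 hiY]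
    · simpa [hiY] using mt (hY i).1 hiY
  · have := h i
    by_cases hiY : i ∈ Y <;> simp_all
  · have := h i
    by_cases hiY : i ∈ Y <;> simp_all

theorem card_filter_hammingNorm_eq {A : ι → Finset β} (h0 : ∀ i, 0 ∈ A i) (t : ℕ) :
    #{x ∈ piFinset A | hammingNorm x = t} = ∑ Y ∈ powersetCard t univ, ∏ j ∈ Y, (#(A j) - 1) := by
  rw [card_eq_sum_card_fiberwise (f := hammingSupport) (t := powersetCard t univ)]
  · refine sum_congr rfl fun Y hY => ?_
    have hYt : #Y = t := (mem_powersetCard.1 hY).2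
    rw [filter_filter, filter_congr fun x _ => and_iff_right_of_imp fun hx => ?_,
      filter_hammingSupport_eq_piFinset h0, card_piFinset]
    · simp [apply_ite card, card_erase_of_mem, h0]
    · rw [← card_hammingSupport, hx, hYt]
  · intro x hx
    exact mem_powersetCard.2 ⟨subset_univ _, (mem_filter.1 hx).2⟩

end Support

theorem IsMixedSteiner.choose_mul_ncard {ι : Type*} [Fintype ι] [DecidableEq ι] {q : ι → ℕ}
    (hq : ∀ i, 0 < q i) {t k : ℕ} {C : Set (ι → ℕ)} (hC : IsMixedSteiner q t k C) :
    k.choose t * C.ncard = #{x ∈ piFinset fun i => range (q i) | hammingNorm x = t} := by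
  obtain ⟨hCword, hCcover, -⟩ := hC
  set Q := piFinset fun i => range (q i)
  have hmemQ (x : ι → ℕ) : x ∈ Q ↔ ∀ i, x i < q i := by simp [Q]
  have hCfin : C.Finite := Q.finite_toSet.subset fun c hc => (hmemQ c).2 (hCword c hc).1
  rw [Set.ncard_eq_toFinset_card C hCfin, mul_comm, ← mul_one #{x ∈ Q | hammingNorm x = t}]
  refine card_mul_eq_card_mul (fun c x => hammingDist x c = k - t) (fun c hc => ?_) fun x hx => ?_
  · obtain ⟨hcQ, rfl⟩ := hCword c (hCfin.mem_toFinset.1 hc)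
    rw [← card_filter_agreesOnSupport (fun i => mem_range.2 (hq i)) ((hmemQ c).2 hcQ) t,
      bipartiteAbove, filter_filter]
    refine congrArg card (filter_congr fun x _ => and_congr_right fun hxt => ?_)
    rw [← hxt, hammingDist_eq_hammingNorm_sub_iff]
  · rw [mem_filter, hmemQ] at hx
    obtain ⟨c, hc, huniq⟩ := hCcover x hx.1 hx.2
    rw [card_eq_one]
    refine ⟨c, eq_singleton_iff_unique_mem.2 ⟨?_, fun c' hc' => ?_⟩⟩
    · simpa [bipartiteBelow] using hc
    · simp only [bipartiteBelow, mem_filter, Set.Finite.mem_toFinset] at hc'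
      exact huniq c' hc'

theorem stmt0_general {n : ℕ} (q : Fin n → ℕ) (hq : ∀ i, 2 ≤ q i) (t k : ℕ)
    (C : Set (Fin n → ℕ)) (hC : IsMixedSteiner q t k C) :
    Nat.choose k t * C.ncard =
      ∑ Y ∈ Finset.powersetCard t (Finset.univ : Finset (Fin n)),
        ∏ j ∈ Y, (q j - 1) := by
  have hq_pos (i : Fin n) : 0 < q i := by linarith [hq i]
  rw [hC.choose_mul_ncard hq_pos, card_filter_hammingNorm_eq fun i => mem_range.2 (hq_pos i)]
  simp only [card_range]

theorem stmt0 {n : ℕ} (q : Fin n → ℕ) (hq : ∀ i, 2 ≤ q i) (t k : ℕ)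
    (ht : 1 ≤ t) (htk : t ≤ k) (hkn : k ≤ n)
    (C : Set (Fin n → ℕ)) (hC : IsMixedSteiner q t k C) :
    Nat.choose k t * C.ncard =
      ∑ Y ∈ Finset.powersetCard t (Finset.univ : Finset (Fin n)),
        ∏ j ∈ Y, (q j - 1) :=
  stmt0_general q hq t k C hC
end

section
/- Let 1 ≤ t ≤ k, let Q = Z_{q_1} × ⋯ × Z_{q_n} and q ≥ 2, and let C be a mixed Steiner system MS(t,k,Q × Z_q), where Q × Z_q is the mixed alphabet obtained by appending one coordinate over Z_q to Q. Then for every nonzero α ∈ Z_q, the set C_α = { c ∈ Q : the word (c,α) with last coordinate α belongs to C } is a mixed Steiner system MS(t−1,k−1,Q). -/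
open Finset

section Hamming

variable {ι κ β : Type*} [Fintype ι] [Fintype κ]

theorem hammingDist_sum_elim [DecidableEq β] (x x' : ι → β) (y y' : κ → β) :
    hammingDist (Sum.elim x y) (Sum.elim x' y') = hammingDist x x' + hammingDist y y' := by
  simp only [hammingDist, card_filter, Fintype.sum_sum_type, Sum.elim_inl, Sum.elim_inr]
  rfl

theorem hammingDist_sum_elim_left [DecidableEq β] (x x' : ι → β) (y : κ → β) :
    hammingDist (Sum.elim x y) (Sum.elim x' y) = hammingDist x x' := by
  simp [hammingDist_sum_elim]

theorem hammingNorm_sum_elim [DecidableEq β] [Zero β] (x : ι → β) (y : κ → β) :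
    hammingNorm (Sum.elim x y) = hammingNorm x + hammingNorm y := by
  simpa [hammingDist_zero_right, Sum.elim_zero_zero] using hammingDist_sum_elim x 0 y 0

theorem hammingNorm_sum_elim_unit [DecidableEq β] [Zero β] (x : ι → β) {a : β} (ha : a ≠ 0) :
    hammingNorm (Sum.elim x fun _ : Unit => a) = hammingNorm x + 1 := by
  rw [hammingNorm_sum_elim]
  simp [hammingNorm, ha]

theorem apply_eq_of_hammingNorm_add_hammingDist_eq {β : ι → Type*} [DecidableEq ι]
    [∀ i, DecidableEq (β i)] [∀ i, Zero (β i)] {x c : ∀ i, β i}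
    (h : hammingNorm x + hammingDist x c = hammingNorm c)
    {i : ι} (hi : x i ≠ 0) : c i = x i := by
  set S : Finset ι := {j | x j ≠ 0}
  set D : Finset ι := {j | x j ≠ c j}
  have hsub : ({j | c j ≠ 0} : Finset ι) ⊆ S ∪ D := by
    intro j
    simp only [S, D, mem_union, mem_filter, mem_univ, true_and]
    grind
  have hcard : #(S ∪ D) + #(S ∩ D) = hammingNorm x + hammingDist x c :=
    card_union_add_card_inter S D
  have hdisj : S ∩ D = ∅ := card_eq_zero.mp (by
    have : hammingNorm c ≤ #(S ∪ D) := card_le_card hsub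
    omega)
  by_contra hne
  have hiSD : i ∈ S ∩ D := by simp [S, D, hi, Ne.symm hne]
  simp [hdisj] at hiSD

end Hamming

namespace IsMixedSteiner

variable {ι : Type*} [Fintype ι] [DecidableEq ι] {q : ι → ℕ} {qq t k : ℕ}
  {C : Set (ι ⊕ Unit → ℕ)} {α : ℕ}

theorem derived_codeword (hC : IsMixedSteiner (Sum.elim q fun _ => qq) t k C) (hα0 : α ≠ 0)
    {c : ι → ℕ} (hc : Sum.elim c (fun _ => α) ∈ C) :
    (∀ i, c i < q i) ∧ hammingNorm c = k - 1 := by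
  obtain ⟨hlt, hnorm⟩ := hC.1 _ hc
  rw [hammingNorm_sum_elim_unit c hα0] at hnorm
  exact ⟨fun i => hlt (Sum.inl i), by omega⟩

theorem derived_existsUnique (hC : IsMixedSteiner (Sum.elim q fun _ => qq) t k C) (hα0 : α ≠ 0)
    (hα : α < qq) (ht : 1 ≤ t) (htk : t ≤ k) {x : ι → ℕ} (hx : ∀ i, x i < q i)
    (hxt : hammingNorm x = t - 1) :
    ∃! c, Sum.elim c (fun _ => α) ∈ C ∧ hammingDist x c = k - 1 - (t - 1) := by
  have hx' : ∀ i, Sum.elim x (fun _ : Unit => α) i < Sum.elim q (fun _ => qq) i := by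
    rintro (i | _)
    exacts [hx i, hα]
  have hxt' : hammingNorm (Sum.elim x fun _ : Unit => α) = t := by
    rw [hammingNorm_sum_elim_unit x hα0]; omega
  obtain ⟨c', ⟨hc'C, hc'd⟩, huniq⟩ := hC.2.1 _ hx' hxt'
  have hlast : c' (Sum.inr ()) = α :=
    apply_eq_of_hammingNorm_add_hammingDist_eq (x := Sum.elim x fun _ => α) (c := c')
      (i := Sum.inr ()) (by rw [hxt', hc'd, (hC.1 _ hc'C).2]; omega) hα0
  have hc' : Sum.elim (c' ∘ Sum.inl) (fun _ => α) = c' := by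
    ext (i | _)
    exacts [rfl, hlast.symm]
  refine ⟨c' ∘ Sum.inl, ⟨hc'.symm ▸ hc'C, ?_⟩, fun d ⟨hdC, hdd⟩ => ?_⟩
  · rw [← hammingDist_sum_elim_left x _ (fun _ : Unit => α), hc', hc'd]; omega
  · have hd : Sum.elim d (fun _ => α) = c' :=
      huniq _ ⟨hdC, by rw [hammingDist_sum_elim_left, hdd]; omega⟩
    rw [← hd]; rfl

theorem derived_dist (hC : IsMixedSteiner (Sum.elim q fun _ => qq) t k C) (ht : 1 ≤ t)
    {c c' : ι → ℕ} (hc : Sum.elim c (fun _ => α) ∈ C) (hc' : Sum.elim c' (fun _ => α) ∈ C)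
    (hne : c ≠ c') : 2 * (k - 1 - (t - 1)) + 1 ≤ hammingDist c c' := by
  have hne' : Sum.elim c (fun _ : Unit => α) ≠ Sum.elim c' (fun _ => α) :=
    fun h => hne (by simpa using congrArg (· ∘ Sum.inl) h)
  have := hC.2.2 _ hc _ hc' hne'
  rw [hammingDist_sum_elim_left] at this
  omega

end IsMixedSteiner

theorem stmt1_general {n : ℕ} (q : Fin n → ℕ) (qq : ℕ)
    (t k : ℕ) (ht : 1 ≤ t) (htk : t ≤ k)
    (C : Set (Fin n ⊕ Unit → ℕ))
    (hC : IsMixedSteiner (Sum.elim q fun _ => qq) t k C)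
    (α : ℕ) (hα0 : α ≠ 0) (hα : α < qq) :
    IsMixedSteiner q (t - 1) (k - 1)
      {c : Fin n → ℕ | Sum.elim c (fun _ => α) ∈ C} :=
  ⟨fun _ hc => hC.derived_codeword hα0 hc,
    fun _ hx hxt => hC.derived_existsUnique hα0 hα ht htk hx hxt,
    fun _ hc _ hc' hne => hC.derived_dist ht hc hc' hne⟩

/-- Deleting the appended coordinate over `Z_q` at a nonzero letter `α` yields
a derived mixed Steiner system MS(t-1, k-1, Q). -/
theorem stmt1 {n : ℕ} (q : Fin n → ℕ) (hq : ∀ i, 2 ≤ q i) (qq : ℕ) (hqq : 2 ≤ qq)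
    (t k : ℕ) (ht : 1 ≤ t) (htk : t ≤ k)
    (C : Set (Fin n ⊕ Unit → ℕ))
    (hC : IsMixedSteiner (Sum.elim q fun _ => qq) t k C)
    (α : ℕ) (hα0 : α ≠ 0) (hα : α < qq) :
    IsMixedSteiner q (t - 1) (k - 1)
      {c : Fin n → ℕ | Sum.elim c (fun _ => α) ∈ C} :=
  stmt1_general q qq t k ht htk C hC α hα0 hα
end

section
/- Let k ≥ 1, let Q = Z_{q_1} × ⋯ × Z_{q_{n−1}} with all q_i ≥ 2, and let q ≥ 2. If there exists a mixed Steiner system MS(1,k,Q × Z_q), then Σ_{i=1}^{n−1} (q_i − 1) ≥ (q−1)(k−1) and k divides Σ_{i=1}^{n−1} (q_i − 1) − (q−1)(k−1). -/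
/-!
For `a ≠ 0` the weight-one word `a·eⱼ` is at distance `k - 1` from a weight-`k` word `c` exactly
when `cⱼ = a`, so for `t = 1` the Steiner property says that every pair (coordinate `j`, nonzero
symbol `a`) is covered by exactly one codeword. Double counting these pairs against the `k` nonzero
entries of each codeword gives `|C| k = ∑_{i<n} (qᵢ - 1) + (q - 1)`, and the `q - 1` codewords with
nonzero last coordinate give `|C| = (q - 1) + N` for some `N`. Substituting,
`∑_{i<n} (qᵢ - 1) = (q - 1)(k - 1) + k N`.
-/

open Finset

section Hamming

variable {ι β : Type*} [Fintype ι] [DecidableEq ι] [Zero β] [DecidableEq β]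

theorem hammingNorm_single {j : ι} {a : β} (ha : a ≠ 0) :
    hammingNorm (Pi.single j a : ι → β) = 1 := by
  simp [hammingNorm, Pi.single_apply, ha, filter_eq']

-- Stated additively so that no truncated subtraction occurs.
theorem hammingDist_single_add_ite (j : ι) (a : β) (c : ι → β) :
    hammingDist (Pi.single j a : ι → β) c + (if c j = 0 then 0 else 1) =
      hammingNorm c + (if a = c j then 0 else 1) := by
  have hrest : ∀ i ∈ ({j}ᶜ : Finset ι),
      (if (Pi.single j a : ι → β) i ≠ c i then 1 else 0) = (if c i ≠ 0 then 1 else 0) := by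
    intro i hi
    simp only [Pi.single_eq_of_ne (by simpa using hi : i ≠ j), ne_comm]
  simp only [hammingDist, hammingNorm, card_filter, Fintype.sum_eq_add_sum_compl j,
    sum_congr rfl hrest, Pi.single_eq_same]
  split_ifs <;> simp_all <;> omega

theorem hammingDist_single_eq_sub_one_iff {j : ι} {a : β} {c : ι → β} {k : ℕ}
    (hc : hammingNorm c = k) (ha : a ≠ 0) :
    hammingDist (Pi.single j a : ι → β) c = k - 1 ↔ c j = a := by
  have h := hammingDist_single_add_ite j a c
  by_cases hcj : c j = a
  · rw [if_pos hcj.symm, hcj, if_neg ha] at h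
    simp only [hcj, iff_true]
    omega
  · rw [if_neg (Ne.symm hcj)] at h
    simp only [hcj, iff_false]
    split_ifs at h with hcj0
    · omega
    · have : 0 < hammingNorm c := hammingNorm_pos_iff.2 fun hc0 => hcj0 (by simp [hc0])
      omega

end Hamming

namespace IsMixedSteiner

variable {ι : Type*} [Fintype ι] [DecidableEq ι] {q : ι → ℕ} {t k : ℕ} {C : Set (ι → ℕ)}

theorem finite (hC : IsMixedSteiner q t k C) : C.Finite :=
  (Set.Finite.pi fun i => Set.finite_Iio (q i)).subset fun c hc => by
    simpa using (hC.1 c hc).1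

theorem existsUnique_apply_eq (hC : IsMixedSteiner q 1 k C) (hq : ∀ i, 0 < q i) {j : ι}
    {a : ℕ} (ha : a ≠ 0) (haq : a < q j) : ∃! c, c ∈ C ∧ c j = a := by
  have hx : ∀ i, (Pi.single j a : ι → ℕ) i < q i := by
    intro i
    rcases eq_or_ne i j with rfl | hij
    · simpa using haq
    · simpa [Pi.single_eq_of_ne hij] using hq i
  refine (existsUnique_congr fun c => and_congr_right fun hcC => ?_).1
    (hC.2.1 _ hx (hammingNorm_single ha))
  exact hammingDist_single_eq_sub_one_iff (hC.1 c hcC).2 ha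

theorem card_filter_apply_ne_zero (hC : IsMixedSteiner q 1 k C) (hq : ∀ i, 0 < q i) (j : ι) :
    #(hC.finite.toFinset.filter (· j ≠ 0)) = q j - 1 := by
  rw [← Nat.card_Ico 1 (q j)]
  apply card_nbij (· j)
  · intro c hc
    simp only [coe_filter, Set.Finite.mem_toFinset, Set.mem_ofPred_eq] at hc
    simp only [coe_Ico, Set.mem_Ico]
    exact ⟨Nat.one_le_iff_ne_zero.2 hc.2, (hC.1 c hc.1).1 j⟩
  · intro c hc c' hc' hcc'
    simp only [coe_filter, Set.Finite.mem_toFinset, Set.mem_ofPred_eq] at hc hc'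
    exact (hC.existsUnique_apply_eq hq hc.2 ((hC.1 c hc.1).1 j)).unique ⟨hc.1, rfl⟩
      ⟨hc'.1, hcc'.symm⟩
  · intro a ha
    simp only [coe_Ico, Set.mem_Ico] at ha
    obtain ⟨c, ⟨hcC, hcj⟩, -⟩ := hC.existsUnique_apply_eq hq (by omega) ha.2
    refine ⟨c, ?_, hcj⟩
    simp only [coe_filter, Set.Finite.mem_toFinset, Set.mem_ofPred_eq, hcj]
    exact ⟨hcC, by omega⟩

theorem ncard_mul_eq_sum (hC : IsMixedSteiner q 1 k C) (hq : ∀ i, 0 < q i) :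
    C.ncard * k = ∑ i, (q i - 1) := by
  rw [Set.ncard_eq_toFinset_card C hC.finite]
  calc #hC.finite.toFinset * k = ∑ c ∈ hC.finite.toFinset, hammingNorm c := by
        rw [sum_congr rfl fun c hc => (hC.1 c (by simpa using hc)).2, sum_const, smul_eq_mul]
    _ = ∑ i, #(hC.finite.toFinset.filter (· i ≠ 0)) := by
        simp only [hammingNorm, card_filter]
        exact sum_comm
    _ = ∑ i, (q i - 1) := sum_congr rfl fun i _ => hC.card_filter_apply_ne_zero hq i

theorem sub_one_le_ncard (hC : IsMixedSteiner q 1 k C) (hq : ∀ i, 0 < q i) (j : ι) :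
    q j - 1 ≤ C.ncard := by
  rw [Set.ncard_eq_toFinset_card C hC.finite, ← hC.card_filter_apply_ne_zero hq j]
  exact card_filter_le _ _

end IsMixedSteiner

theorem le_and_dvd_sub_of_mul_eq_add {n k s a : ℕ} (ha : a ≤ n) (h : n * k = s + a) :
    a * (k - 1) ≤ s ∧ k ∣ s - a * (k - 1) := by
  obtain ⟨N, rfl⟩ := Nat.exists_eq_add_of_le ha
  rcases k with _ | k
  · simp only [mul_zero] at h
    simp [show s = 0 by omega]
  · have hs : s = a * k + (k + 1) * N := by linarith [h]
    simp only [Nat.add_sub_cancel, hs, Nat.add_sub_cancel_left]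
    exact ⟨Nat.le_add_right _ _, dvd_mul_right _ _⟩

theorem stmt2_general {m : ℕ} (q : Fin m → ℕ) (hq : ∀ i, 2 ≤ q i) (qq k : ℕ)
    (hqq : 2 ≤ qq)
    (h : ∃ C : Set (Fin m ⊕ Unit → ℕ),
        IsMixedSteiner (Sum.elim q fun _ => qq) 1 k C) :
    (qq - 1) * (k - 1) ≤ ∑ i, (q i - 1) ∧
      k ∣ (∑ i, (q i - 1)) - (qq - 1) * (k - 1) := by
  obtain ⟨C, hC⟩ := h
  have hpos : ∀ i, 0 < Sum.elim q (fun _ : Unit => qq) i := by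
    rintro (i | -)
    · exact lt_of_lt_of_le two_pos (hq i)
    · exact lt_of_lt_of_le two_pos hqq
  have hcount : C.ncard * k = ∑ i, (q i - 1) + (qq - 1) := by
    simpa [Fintype.sum_sum_type] using hC.ncard_mul_eq_sum hpos
  exact le_and_dvd_sub_of_mul_eq_add (hC.sub_one_le_ncard hpos (Sum.inr ())) hcount

theorem stmt2 {m : ℕ} (q : Fin m → ℕ) (hq : ∀ i, 2 ≤ q i) (qq k : ℕ)
    (hk : 1 ≤ k) (hqq : 2 ≤ qq)
    (h : ∃ C : Set (Fin m ⊕ Unit → ℕ),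
        IsMixedSteiner (Sum.elim q fun _ => qq) 1 k C) :
    (qq - 1) * (k - 1) ≤ ∑ i, (q i - 1) ∧
      k ∣ (∑ i, (q i - 1)) - (qq - 1) * (k - 1) :=
  stmt2_general q hq qq k hqq h
end

section
/- Let k ≥ 2 and q ≥ 2. A mixed Steiner system MS(1,k, Z_2^n × Z_q) exists if and only if n ≥ (k−1)(q−1) and k divides n − (k−1)(q−1). -/
open Finset



-- decomposition lemmas
lemma hdist_sum {α β : Type*} [Fintype α] [Fintype β] (f g : α ⊕ β → ℕ) :
    hammingDist f g =
      hammingDist (f ∘ Sum.inl) (g ∘ Sum.inl) + hammingDist (f ∘ Sum.inr) (g ∘ Sum.inr) := by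
  simp only [hammingDist, Finset.card_filter, Fintype.sum_sum_type, Function.comp]

lemma hnorm_sum {α β : Type*} [Fintype α] [Fintype β] (f : α ⊕ β → ℕ) :
    hammingNorm f = hammingNorm (f ∘ Sum.inl) + hammingNorm (f ∘ Sum.inr) := by
  simp only [hammingNorm, Finset.card_filter, Fintype.sum_sum_type, Function.comp]

lemma hdist_unit (f g : Unit → ℕ) : hammingDist f g = if f () = g () then 0 else 1 := by
  by_cases h : f () = g ()
  · simp [hammingDist, h]
  · simp only [hammingDist]
    rw [if_neg h]
    have : ({x | f x ≠ g x} : Finset Unit) = {()} := by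
      ext x; cases x; simp [h]
    rw [this]; rfl

lemma hnorm_unit (f : Unit → ℕ) : hammingNorm f = if f () = 0 then 0 else 1 := by
  have := hdist_unit f 0
  simpa [hammingNorm, hammingDist] using this


lemma norm_one_support {ι : Type*} [Fintype ι] [DecidableEq ι] {x : ι → ℕ}
    (hx : hammingNorm x = 1) : ∃ i0, x i0 ≠ 0 ∧ ∀ j, j ≠ i0 → x j = 0 := by
  rw [hammingNorm, Finset.card_eq_one] at hx
  obtain ⟨i0, hi0⟩ := hx
  refine ⟨i0, ?_, ?_⟩
  · have : i0 ∈ ({i | x i ≠ 0} : Finset ι) := by rw [hi0]; exact Finset.mem_singleton_self _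
    simpa using this
  · intro j hj
    by_contra h
    have : j ∈ ({i | x i ≠ 0} : Finset ι) := by simpa using h
    rw [hi0] at this
    exact hj (Finset.mem_singleton.1 this)

lemma lemA {ι : Type*} [Fintype ι] [DecidableEq ι] {x c : ι → ℕ} {k : ℕ}
    (hk : 1 ≤ k) (hc : hammingNorm c = k) {i0 : ι} (hx0 : x i0 ≠ 0)
    (hx : ∀ j, j ≠ i0 → x j = 0) :
    hammingDist x c = k - 1 ↔ c i0 = x i0 := by
  classical
  set S : Finset ι := {i | c i ≠ 0} with hS
  set D : Finset ι := {i | x i ≠ c i} with hD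
  have hcard : S.card = k := hc
  have hdd : hammingDist x c = D.card := rfl
  have herase : D.erase i0 = S.erase i0 := by
    ext j
    simp only [Finset.mem_erase, hD, hS, Finset.mem_filter, Finset.mem_univ, true_and]
    constructor
    · rintro ⟨hj, hne⟩; exact ⟨hj, by rw [hx j hj] at hne; exact fun h => hne h.symm⟩
    · rintro ⟨hj, hne⟩; exact ⟨hj, by rw [hx j hj]; exact fun h => hne h.symm⟩
  by_cases h : c i0 = x i0
  · have hi0D : i0 ∉ D := by simp [hD, h]
    have hi0S : i0 ∈ S := by simp [hS]; rw [h]; exact hx0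
    rw [hdd, ← Finset.erase_eq_of_notMem hi0D, herase, Finset.card_erase_of_mem hi0S, hcard]
    simp [h]
  · rw [iff_false_intro h, iff_false]
    have hi0D : i0 ∈ D := by simp [hD]; exact fun hh => h hh.symm
    have h1 : D.card = (S.erase i0).card + 1 := by
      rw [← herase, Finset.card_erase_add_one hi0D]
    by_cases h2 : c i0 = 0
    · have hi0S : i0 ∉ S := by simp [hS, h2]
      rw [hdd, h1, Finset.erase_eq_of_notMem hi0S, hcard]
      omega
    · have hi0S : i0 ∈ S := by simp [hS, h2]
      rw [hdd, h1, Finset.card_erase_of_mem hi0S, hcard]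
      omega

namespace MSaux

lemma div_eq_iff' {d i t : ℕ} (hd : 0 < d) : i / d = t ↔ t * d ≤ i ∧ i < (t + 1) * d := by
  constructor
  · rintro rfl
    exact ⟨Nat.div_mul_le_self i d, (Nat.div_lt_iff_lt_mul hd).1 (Nat.lt_succ_self _)⟩
  · rintro ⟨h1, h2⟩
    have ha : t ≤ i / d := (Nat.le_div_iff_mul_le hd).2 h1
    have hb : i / d < t + 1 := (Nat.div_lt_iff_lt_mul hd).2 h2
    omega

def blk (k q m : ℕ) (i : ℕ) : ℕ :=
  if i < (k-1)*(q-1) then i / (k-1) else (q-1) + (i - (k-1)*(q-1))/k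

def start (k q m : ℕ) (t : ℕ) : ℕ :=
  if t < q-1 then t*(k-1) else (k-1)*(q-1) + (t-(q-1))*k

def bsize (k q m : ℕ) (t : ℕ) : ℕ := if t < q-1 then k-1 else k

lemma blk_eq {k q : ℕ} (m : ℕ) (hk : 2 ≤ k) (i t : ℕ) :
    blk k q m i = t ↔ start k q m t ≤ i ∧ i < start k q m t + bsize k q m t := by
  have hk1 : 0 < k - 1 := by omega
  have hk0 : 0 < k := by omega
  unfold blk start bsize
  by_cases hi : i < (k-1)*(q-1) <;> by_cases ht : t < q-1
  · rw [if_pos hi, if_pos ht, if_pos ht, div_eq_iff' hk1]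
    have h1 : t * (k-1) ≤ i ↔ t * (k-1) ≤ i := Iff.rfl
    have h2 : (t+1)*(k-1) = t*(k-1) + (k-1) := by ring
    omega
  · rw [if_pos hi, if_neg ht, if_neg ht]
    have hdlt : i / (k-1) < q - 1 := by
      apply (Nat.div_lt_iff_lt_mul hk1).2
      calc i < (k-1)*(q-1) := hi
        _ = (q-1)*(k-1) := by ring
    have : ¬ ((k-1)*(q-1) + (t - (q-1))*k ≤ i) := by omega
    omega
  · rw [if_neg hi, if_pos ht, if_pos ht]
    have hge : (t+1)*(k-1) ≤ (k-1)*(q-1) := by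
      calc (t+1)*(k-1) ≤ (q-1)*(k-1) := Nat.mul_le_mul_right _ (by omega)
        _ = (k-1)*(q-1) := by ring
    have h2 : (t+1)*(k-1) = t*(k-1) + (k-1) := by ring
    generalize (i - (k-1)*(q-1))/k = e
    omega
  · rw [if_neg hi, if_neg ht, if_neg ht]
    have key : (i - (k-1)*(q-1)) / k = t - (q-1) ↔
        (t-(q-1)) * k ≤ i - (k-1)*(q-1) ∧ i - (k-1)*(q-1) < (t-(q-1)+1)*k :=
      div_eq_iff' hk0
    have h2 : (t-(q-1)+1)*k = (t-(q-1))*k + k := by ring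
    generalize hgen : (i - (k-1)*(q-1))/k = e at key ⊢
    omega

lemma blk_lt {k q : ℕ} (m : ℕ) (hk : 2 ≤ k) (i : ℕ) (hi : i < (k-1)*(q-1) + m*k) :
    blk k q m i < q - 1 + m := by
  have hk1 : 0 < k - 1 := by omega
  have hk0 : 0 < k := by omega
  unfold blk
  by_cases h : i < (k-1)*(q-1)
  · rw [if_pos h]
    have : i / (k-1) < q - 1 := by
      apply (Nat.div_lt_iff_lt_mul hk1).2
      calc i < (k-1)*(q-1) := h
        _ = (q-1)*(k-1) := by ring
    omega
  · rw [if_neg h]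
    have : (i - (k-1)*(q-1))/k < m := by
      apply (Nat.div_lt_iff_lt_mul hk0).2
      omega
    omega

lemma start_size_le {k q : ℕ} (m : ℕ) (hk : 2 ≤ k) (t : ℕ) (ht : t < q - 1 + m) :
    start k q m t + bsize k q m t ≤ (k-1)*(q-1) + m*k := by
  unfold start bsize
  by_cases h : t < q - 1
  · rw [if_pos h, if_pos h]
    have : t*(k-1) + (k-1) = (t+1)*(k-1) := by ring
    have h2 : (t+1)*(k-1) ≤ (q-1)*(k-1) := Nat.mul_le_mul_right _ (by omega)
    have h3 : (q-1)*(k-1) = (k-1)*(q-1) := by ring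
    omega
  · rw [if_neg h, if_neg h]
    have : (t-(q-1))*k + k = (t-(q-1)+1)*k := by ring
    have h2 : (t-(q-1)+1)*k ≤ m*k := Nat.mul_le_mul_right _ (by omega)
    omega

lemma card_blk {n k q : ℕ} (m : ℕ) (hk : 2 ≤ k) (hn : n = (k-1)*(q-1) + m*k)
    (t : ℕ) (ht : t < q - 1 + m) :
    ((univ : Finset (Fin n)).filter (fun i => blk k q m i.val = t)).card = bsize k q m t := by
  have hcc : ((univ : Finset (Fin n)).filter (fun i => blk k q m i.val = t)).card
      = ((Finset.range n).filter (fun i => blk k q m i = t)).card := by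
    rw [Finset.card_filter, Finset.card_filter]
    exact Fin.sum_univ_eq_sum_range (fun i => if blk k q m i = t then 1 else 0) n
  rw [hcc]
  have hss := start_size_le m hk t ht
  have hico : (Finset.range n).filter (fun i => blk k q m i = t)
      = Finset.Ico (start k q m t) (start k q m t + bsize k q m t) := by
    ext i
    simp only [Finset.mem_filter, Finset.mem_range, Finset.mem_Ico]
    rw [blk_eq m hk i t]
    omega
  rw [hico, Nat.card_Ico]
  omega

end MSaux

namespace MSaux

lemma forward {n : ℕ} (k q : ℕ) (hk : 2 ≤ k) (hq : 2 ≤ q)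
    (C : Set (Fin n ⊕ Unit → ℕ))
    (h : IsMixedSteiner (Sum.elim (fun _ => 2) (fun _ => q)) 1 k C) :
    (k - 1) * (q - 1) ≤ n ∧ k ∣ n - (k - 1) * (q - 1) := by
  classical
  obtain ⟨h1, h2, _⟩ := h
  have hk1 : 1 ≤ k := by omega
  -- C is finite
  have hfin : C.Finite := by
    apply Set.Finite.subset (Set.Finite.pi (fun j : Fin n ⊕ Unit =>
      Set.finite_Iio (Sum.elim (fun _ => 2) (fun _ => q) j)))
    intro c hc
    exact fun j _ => (h1 c hc).1 j
  set CF := hfin.toFinset with hCF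
  -- words of weight one
  set xi : Fin n → (Fin n ⊕ Unit → ℕ) := fun i j => if j = Sum.inl i then 1 else 0 with hxi
  have hxib : ∀ i, ∀ j, xi i j < Sum.elim (fun _ => 2) (fun _ => (q:ℕ)) j := by
    intro i j
    cases j with
    | inl a => simp only [hxi, Sum.elim_inl]; split <;> omega
    | inr a => simp [hxi]; omega
  have hxin : ∀ i, hammingNorm (xi i) = 1 := by
    intro i
    have : ({j | xi i j ≠ 0} : Finset (Fin n ⊕ Unit)) = {Sum.inl i} := by
      ext j; by_cases hj : j = Sum.inl i <;> simp [hxi, hj]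
    rw [hammingNorm, this, Finset.card_singleton]
  have keyF := fun i : Fin n => h2 (xi i) (hxib i) (hxin i)
  choose F hF using keyF
  set yv : Fin (q-1) → (Fin n ⊕ Unit → ℕ) :=
    fun v j => if j = Sum.inr () then (v : ℕ) + 1 else 0 with hyv
  have hyvb : ∀ v, ∀ j, yv v j < Sum.elim (fun _ => 2) (fun _ => (q:ℕ)) j := by
    intro v j
    cases j with
    | inl a => simp [hyv]
    | inr a =>
      have := v.isLt
      simp only [hyv, Sum.elim_inr]
      split <;> omega
  have hyvn : ∀ v, hammingNorm (yv v) = 1 := by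
    intro v
    have : ({j | yv v j ≠ 0} : Finset (Fin n ⊕ Unit)) = {Sum.inr ()} := by
      ext j; by_cases hj : j = Sum.inr () <;> simp [hyv, hj]
    rw [hammingNorm, this, Finset.card_singleton]
  have keyG := fun v : Fin (q-1) => h2 (yv v) (hyvb v) (hyvn v)
  choose G hG using keyG
  -- characterization of F
  have hFiff : ∀ (i : Fin n), ∀ c ∈ C, (F i = c ↔ c (Sum.inl i) ≠ 0) := by
    intro i c hc
    have hxx : ∀ j, j ≠ Sum.inl i → xi i j = 0 := by
      intro j hj; simp [hxi, hj]
    have hx0 : xi i (Sum.inl i) ≠ 0 := by simp [hxi]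
    constructor
    · rintro rfl
      have := (hF i).1.2
      rw [lemA hk1 (h1 _ (hF i).1.1).2 hx0 hxx] at this
      rw [this]; simp [hxi]
    · intro hne
      have hcb := (h1 c hc).1 (Sum.inl i)
      simp only [Sum.elim_inl] at hcb
      have hceq : c (Sum.inl i) = xi i (Sum.inl i) := by simp [hxi]; omega
      have := (lemA hk1 (h1 c hc).2 hx0 hxx).2 hceq
      exact ((hF i).2 c ⟨hc, this⟩).symm
  have hGiff : ∀ (v : Fin (q-1)), ∀ c ∈ C, (G v = c ↔ c (Sum.inr ()) = (v : ℕ) + 1) := by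
    intro v c hc
    have hxx : ∀ j, j ≠ Sum.inr () → yv v j = 0 := by
      intro j hj; simp [hyv, hj]
    have hx0 : yv v (Sum.inr ()) ≠ 0 := by simp [hyv]
    constructor
    · rintro rfl
      have := (hG v).1.2
      rw [lemA hk1 (h1 _ (hG v).1.1).2 hx0 hxx] at this
      rw [this]; simp [hyv]
    · intro hne
      have hceq : c (Sum.inr ()) = yv v (Sum.inr ()) := by simp [hyv]; omega
      have := (lemA hk1 (h1 c hc).2 hx0 hxx).2 hceq
      exact ((hG v).2 c ⟨hc, this⟩).symm
  -- counting n
  have hFmem : ∀ i ∈ (univ : Finset (Fin n)), F i ∈ CF := by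
    intro i _; rw [hCF, Set.Finite.mem_toFinset]; exact (hF i).1.1
  have hcount1 : n = ∑ c ∈ CF, (univ.filter fun i => F i = c).card := by
    rw [← Finset.card_eq_sum_card_fiberwise hFmem, Finset.card_univ, Fintype.card_fin]
  have hfib1 : ∀ c ∈ CF, (univ.filter fun i => F i = c).card = hammingNorm (c ∘ Sum.inl) := by
    intro c hc
    rw [hCF, Set.Finite.mem_toFinset] at hc
    congr 1
    ext i
    simp only [Finset.mem_filter, Finset.mem_univ, true_and, hammingNorm]
    rw [hFiff i c hc]
    simp
  -- counting q-1
  have hGmem : ∀ v ∈ (univ : Finset (Fin (q-1))), G v ∈ CF := by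
    intro v _; rw [hCF, Set.Finite.mem_toFinset]; exact (hG v).1.1
  have hcount2 : q - 1 = ∑ c ∈ CF, (univ.filter fun v => G v = c).card := by
    rw [← Finset.card_eq_sum_card_fiberwise hGmem, Finset.card_univ, Fintype.card_fin]
  have hfib2 : ∀ c ∈ CF, (univ.filter fun v => G v = c).card = hammingNorm (c ∘ Sum.inr) := by
    intro c hc
    rw [hCF, Set.Finite.mem_toFinset] at hc
    rw [hnorm_unit]
    have hcb := (h1 c hc).1 (Sum.inr ())
    simp only [Sum.elim_inr] at hcb
    by_cases hz : c (Sum.inr ()) = 0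
    · rw [if_pos (by simpa using hz)]
      rw [Finset.card_eq_zero]
      ext v
      simp only [Finset.mem_filter, Finset.mem_univ, true_and, Finset.notMem_empty, iff_false]
      intro hgv
      rw [hGiff v c hc] at hgv
      omega
    · rw [if_neg (by simpa using hz)]
      rw [Finset.card_eq_one]
      refine ⟨⟨c (Sum.inr ()) - 1, by omega⟩, ?_⟩
      ext v
      simp only [Finset.mem_filter, Finset.mem_univ, true_and, Finset.mem_singleton]
      rw [hGiff v c hc, Fin.ext_iff]
      simp only
      omega
  -- total count
  have htot : n + (q - 1) = k * CF.card := by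
    have step : (∑ c ∈ CF, (univ.filter fun i => F i = c).card)
        + (∑ c ∈ CF, (univ.filter fun v => G v = c).card) = k * CF.card := by
      rw [← Finset.sum_add_distrib]
      have hsum : ∀ c ∈ CF, (univ.filter fun i => F i = c).card
          + (univ.filter fun v => G v = c).card = k := by
        intro c hc
        rw [hfib1 c hc, hfib2 c hc, ← hnorm_sum]
        rw [hCF, Set.Finite.mem_toFinset] at hc
        exact (h1 c hc).2
      rw [Finset.sum_congr rfl hsum, Finset.sum_const, smul_eq_mul, Nat.mul_comm]
    calc n + (q - 1) = (∑ c ∈ CF, (univ.filter fun i => F i = c).card)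
          + (∑ c ∈ CF, (univ.filter fun v => G v = c).card) := by
          rw [← hcount1, ← hcount2]
      _ = k * CF.card := step
  have hle : q - 1 ≤ CF.card := by
    have := Finset.card_le_card_of_injOn (s := (univ : Finset (Fin (q-1)))) (t := CF)
        G (fun v _ => hGmem v (Finset.mem_univ v)) ?_
    · simpa using this
    · intro v _ w _ hvw
      have h1' : G v (Sum.inr ()) = (v : ℕ) + 1 :=
        (hGiff v (G v) (hG v).1.1).1 rfl
      have h2' : G w (Sum.inr ()) = (w : ℕ) + 1 :=
        (hGiff w (G w) (hG w).1.1).1 rfl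
      rw [hvw, h2'] at h1'
      exact Fin.ext (by omega)
  -- arithmetic conclusion
  obtain ⟨k', rfl⟩ : ∃ k', k = k' + 1 := ⟨k - 1, by omega⟩
  set N := CF.card with hN
  set m0 := N - (q - 1) with hm0
  have hNe : N = (q - 1) + m0 := by omega
  have e1 : (k' + 1) * N = k' * (q-1) + k' * m0 + N := by
    rw [Nat.succ_mul, hNe, Nat.mul_add]
  set A := k' * (q - 1) with hA
  set B := k' * m0 with hB
  have hgA : (k' + 1 - 1) * (q - 1) = A := by simp [hA]
  rw [hgA]
  constructor
  · omega
  · refine ⟨m0, ?_⟩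
    have : n - A = B + m0 := by omega
    rw [this, hB, Nat.succ_mul]

lemma backward {n : ℕ} (k q : ℕ) (hk : 2 ≤ k) (hq : 2 ≤ q)
    (h1 : (k - 1) * (q - 1) ≤ n) (h2 : k ∣ n - (k - 1) * (q - 1)) :
    ∃ C : Set (Fin n ⊕ Unit → ℕ),
      IsMixedSteiner (Sum.elim (fun _ => 2) (fun _ => q)) 1 k C := by
  classical
  obtain ⟨m, hm⟩ := h2
  have hn : n = (k-1)*(q-1) + m*k := by
    have hkm : k * m = m * k := Nat.mul_comm _ _
    omega
  set T := q - 1 + m with hT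
  set cw : ℕ → (Fin n ⊕ Unit → ℕ) := fun t => Sum.elim
    (fun i : Fin n => if blk k q m i.val = t then 1 else 0)
    (fun _ => if t < q - 1 then t + 1 else 0) with hcw
  have hcwl : ∀ t, (cw t) ∘ Sum.inl = fun i : Fin n => if blk k q m i.val = t then 1 else 0 :=
    fun t => rfl
  have hcwr : ∀ t, (cw t) ∘ Sum.inr = fun _ : Unit => if t < q - 1 then t + 1 else 0 :=
    fun t => rfl
  -- norm computation
  have hnormc : ∀ t, t < T → hammingNorm (cw t) = k := by
    intro t ht
    rw [hnorm_sum, hcwl, hcwr, hnorm_unit]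
    have hfilter : hammingNorm (fun i : Fin n => if blk k q m i.val = t then 1 else 0)
        = ((univ : Finset (Fin n)).filter (fun i => blk k q m i.val = t)).card := by
      unfold hammingNorm
      congr 1
      ext i
      by_cases hb : blk k q m i.val = t <;> simp [hb]
    rw [hfilter, card_blk m hk hn t ht]
    unfold bsize
    by_cases htq : t < q - 1
    · rw [if_pos htq, if_pos htq, if_neg (Nat.succ_ne_zero t)]
      omega
    · rw [if_neg htq, if_neg htq, if_pos rfl]
      omega
  refine ⟨cw '' (Set.Iio T), ?_, ?_, ?_⟩
  · rintro c ⟨t, ht, rfl⟩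
    simp only [Set.mem_Iio] at ht
    refine ⟨?_, hnormc t ht⟩
    intro j
    cases j with
    | inl i =>
      simp only [hcw, Sum.elim_inl]
      split <;> omega
    | inr u =>
      simp only [hcw, Sum.elim_inr]
      split <;> omega
  · -- covering condition
    intro x hxb hxn
    obtain ⟨i0, hi00, hi0z⟩ := norm_one_support hxn
    have hk1 : 1 ≤ k := by omega
    cases i0 with
    | inl i =>
      have hx1 : x (Sum.inl i) = 1 := by
        have := hxb (Sum.inl i)
        simp only [Sum.elim_inl] at this
        omega
      have hblt : blk k q m i.val < T := blk_lt m hk i.val (hn ▸ i.isLt)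
      refine ⟨cw (blk k q m i.val), ⟨⟨_, Set.mem_Iio.2 hblt, rfl⟩, ?_⟩, ?_⟩
      · rw [lemA hk1 (hnormc _ hblt) hi00 hi0z]
        simp [hcw, hx1]
      · rintro y ⟨⟨t, ht, rfl⟩, hdist⟩
        simp only [Set.mem_Iio] at ht
        rw [lemA hk1 (hnormc t ht) hi00 hi0z] at hdist
        simp only [hcw, Sum.elim_inl, hx1] at hdist
        have : blk k q m i.val = t := by
          by_contra hcon
          rw [if_neg hcon] at hdist
          omega
        rw [this]
    | inr u =>
      cases u
      have hxq : x (Sum.inr ()) < q := by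
        have := hxb (Sum.inr ())
        simpa using this
      set w := x (Sum.inr ()) with hw
      have hw1 : 1 ≤ w := by omega
      have hwT : w - 1 < T := by omega
      refine ⟨cw (w - 1), ⟨⟨_, Set.mem_Iio.2 hwT, rfl⟩, ?_⟩, ?_⟩
      · rw [lemA hk1 (hnormc _ hwT) hi00 hi0z]
        simp only [hcw, Sum.elim_inr]
        rw [if_pos (by omega)]
        omega
      · rintro y ⟨⟨t, ht, rfl⟩, hdist⟩
        simp only [Set.mem_Iio] at ht
        rw [lemA hk1 (hnormc t ht) hi00 hi0z] at hdist
        simp only [hcw, Sum.elim_inr] at hdist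
        have : t = w - 1 := by
          by_cases htq : t < q - 1
          · rw [if_pos htq] at hdist; omega
          · rw [if_neg htq] at hdist; omega
        rw [this]
  · -- distance condition
    rintro c ⟨t, ht, rfl⟩ c' ⟨t', ht', rfl⟩ hne
    simp only [Set.mem_Iio] at ht ht'
    have htt : t ≠ t' := by rintro rfl; exact hne rfl
    rw [hdist_sum, hcwl, hcwl, hcwr, hcwr, hdist_unit]
    have hbin : hammingDist (fun i : Fin n => if blk k q m i.val = t then 1 else 0)
        (fun i : Fin n => if blk k q m i.val = t' then 1 else 0)
        = bsize k q m t + bsize k q m t' := by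
      unfold hammingDist
      have hset : ({i | (if blk k q m i.val = t then 1 else 0)
            ≠ (if blk k q m i.val = t' then 1 else 0)} : Finset (Fin n))
          = ((univ : Finset (Fin n)).filter (fun i => blk k q m i.val = t))
            ∪ ((univ : Finset (Fin n)).filter (fun i => blk k q m i.val = t')) := by
        ext i
        by_cases hb : blk k q m i.val = t <;> by_cases hb' : blk k q m i.val = t'
        · exact absurd (hb.symm.trans hb') htt
        · simp [hb, hb', htt]
        · simp only [Finset.mem_filter, Finset.mem_union, Finset.mem_univ, true_and]
          simp [hb, hb']
          omega
        · simp [hb, hb']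
      rw [hset, Finset.card_union_of_disjoint, card_blk m hk hn t ht, card_blk m hk hn t' ht']
      · rw [Finset.disjoint_filter]
        intro i _ hbi hbi'
        exact htt (hbi ▸ hbi')
    rw [hbin]
    have h2k : 2 * (k - 1) + 1 = 2*k - 1 := by omega
    unfold bsize
    by_cases h1' : t < q - 1 <;> by_cases h2' : t' < q - 1
    · rw [if_pos h1', if_pos h2', if_pos h1', if_pos h2',
        if_neg (show ¬(t+1 = t'+1) by omega)]
      omega
    · rw [if_pos h1', if_neg h2', if_pos h1', if_neg h2',
        if_neg (show ¬(t+1 = 0) by omega)]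
      omega
    · rw [if_neg h1', if_pos h2', if_neg h1', if_pos h2',
        if_neg (show ¬(0 = t'+1) by omega)]
      omega
    · rw [if_neg h1', if_neg h2', if_neg h1', if_neg h2', if_pos rfl]
      omega

end MSaux

theorem stmt5 {n : ℕ} (k q : ℕ) (hk : 2 ≤ k) (hq : 2 ≤ q) :
    (∃ C : Set (Fin n ⊕ Unit → ℕ),
        IsMixedSteiner (Sum.elim (fun _ => 2) (fun _ => q)) 1 k C) ↔
      ((k - 1) * (q - 1) ≤ n ∧ k ∣ n - (k - 1) * (q - 1)) := by
  constructor
  · rintro ⟨C, hC⟩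
    exact MSaux.forward k q hk hq C hC
  · rintro ⟨h1, h2⟩
    exact MSaux.backward k q hk hq h1 h2
end

section
/- Let 1 ≤ t ≤ k ≤ n, let Q = Z_{q_1} × ⋯ × Z_{q_{n−1}} with all q_i ≥ 2, and let q > 2. If there exists a mixed Steiner system MS(t,k, Q × Z_q), where the codewords have length n, then n ≥ (k−t)·q + 2t − k. -/
open Finset

lemma myHammingNorm_eq_card {ι : Type*} [Fintype ι] [DecidableEq ι] (x : ι → ℕ) :
    hammingNorm x = (univ.filter fun i => x i ≠ 0).card := rfl

lemma myHammingDist_eq_card {ι : Type*} [Fintype ι] [DecidableEq ι] (x y : ι → ℕ) :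
    hammingDist x y = (univ.filter fun i => x i ≠ y i).card := rfl

lemma agree_of_dist {ι : Type*} [Fintype ι] [DecidableEq ι] {t k : ℕ} (htk : t ≤ k)
    {x c : ι → ℕ} (hx : hammingNorm x = t) (hc : hammingNorm c = k)
    (hd : hammingDist x c = k - t) : ∀ i, x i ≠ 0 → c i = x i := by
  classical
  set A := univ.filter fun i => x i ≠ 0 with hA
  set B := univ.filter fun i => c i ≠ 0 with hB
  set D := univ.filter fun i => x i ≠ c i with hD
  have hsub : B \ A ⊆ D := by
    intro i hi
    simp only [hB, hA, hD, mem_sdiff, mem_filter, mem_univ, true_and, not_not] at hi ⊢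
    omega
  have hcardD : D.card = k - t := hd
  have hcardA : A.card = t := hx
  have hcardB : B.card = k := hc
  have hle : D.card ≤ (B \ A).card := by
    have := le_card_sdiff A B
    omega
  have heq : B \ A = D := eq_of_subset_of_card_le hsub hle
  intro i hxi
  by_contra hne
  have hiD : i ∈ D := by
    simp only [hD, mem_filter, mem_univ, true_and]
    exact fun hh => hne hh.symm
  rw [← heq] at hiD
  have := (mem_sdiff.mp hiD).2
  simp [hA, hxi] at this

/-- Lower bound on the length `n = m + 1` of the codewords of an
MS(t,k, Q × Z_q) with `q > 2`: `n ≥ (k-t)q + 2t - k`. -/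
theorem stmt7 {m : ℕ} (q : Fin m → ℕ) (hq : ∀ i, 2 ≤ q i) (qq t k : ℕ)
    (ht : 1 ≤ t) (htk : t ≤ k) (hk : k ≤ m + 1) (hqq : 2 < qq)
    (h : ∃ C : Set (Fin m ⊕ Unit → ℕ),
        IsMixedSteiner (Sum.elim q fun _ => qq) t k C) :
    ((k : ℤ) - t) * qq + 2 * t - k ≤ (m : ℤ) + 1 := by
  classical
  obtain ⟨C, hC1, hC2, hC3⟩ := h
  set u : Fin m ⊕ Unit := Sum.inr () with hu
  set xa : ℕ → (Fin m ⊕ Unit) → ℕ :=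
    fun a => Sum.elim (fun i => if (i : ℕ) < t - 1 then 1 else 0) (fun _ => a) with hxa
  have ht1m : t - 1 ≤ m := by omega
  have hfinlt : ∀ j ∈ Finset.range (t - 1), j < m :=
    fun j hj => lt_of_lt_of_le (mem_range.mp hj) ht1m
  have hTfin : ∀ a, a ≠ 0 →
      (univ.filter fun i => xa a i ≠ 0)
        = ((Finset.range (t - 1)).attachFin hfinlt).disjSum (univ : Finset Unit) := by
    intro a ha
    ext i
    cases i with
    | inl j =>
      simp only [mem_filter, mem_univ, true_and, inl_mem_disjSum, mem_attachFin, mem_range,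
        hxa, Sum.elim_inl]
      split_ifs with hj <;> simp [hj]
    | inr v =>
      simp [hxa, ha]
  have hnorm : ∀ a, a ≠ 0 → hammingNorm (xa a) = t := by
    intro a ha
    rw [myHammingNorm_eq_card, hTfin a ha, card_disjSum, card_attachFin, card_range]
    simp only [card_univ, Fintype.card_unit]
    omega
  have hbnd : ∀ a, a < qq → ∀ i, xa a i < Sum.elim q (fun _ => qq) i := by
    intro a ha i
    cases i with
    | inl j =>
      have := hq j
      simp only [hxa, Sum.elim_inl]
      split_ifs <;> omega
    | inr v => simpa [hxa] using ha
  have key : ∀ a, 1 ≤ a → a < qq →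
      ∃ c, c ∈ C ∧ hammingDist (xa a) c = k - t :=
    fun a h1 h2 => (hC2 (xa a) (hbnd a h2) (hnorm a (by omega))).exists
  choose! cf hcf1 hcf2 using key
  have hag : ∀ a, 1 ≤ a → a < qq → ∀ i, xa a i ≠ 0 → cf a i = xa a i :=
    fun a h1 h2 => agree_of_dist htk (hnorm a (by omega)) (hC1 _ (hcf1 a h1 h2)).2
      (hcf2 a h1 h2)
  set T : Finset (Fin m ⊕ Unit) := univ.filter fun i => xa 1 i ≠ 0 with hT
  have hTcard : T.card = t := by
    rw [hT, ← myHammingNorm_eq_card]; exact hnorm 1 one_ne_zero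
  have hTa : ∀ a, a ≠ 0 → (univ.filter fun i => xa a i ≠ 0) = T := by
    intro a ha; rw [hTfin a ha, hT, hTfin 1 one_ne_zero]
  set S : ℕ → Finset (Fin m ⊕ Unit) :=
    fun a => (univ.filter fun i => cf a i ≠ 0) \ T with hS
  have hTsub : ∀ a, 1 ≤ a → a < qq → T ⊆ univ.filter fun i => cf a i ≠ 0 := by
    intro a h1 h2 i hi
    rw [← hTa a (by omega)] at hi
    simp only [mem_filter, mem_univ, true_and] at hi ⊢
    rw [hag a h1 h2 i hi]; exact hi
  have hScard : ∀ a, 1 ≤ a → a < qq → (S a).card = k - t := by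
    intro a h1 h2
    rw [hS]
    have hck : (univ.filter fun i => cf a i ≠ 0).card = k := by
      rw [← myHammingNorm_eq_card]; exact (hC1 _ (hcf1 a h1 h2)).2
    rw [card_sdiff_of_subset (hTsub a h1 h2), hck, hTcard]
  have huT : ∀ a, a ≠ 0 → xa a u ≠ 0 := by intro a ha; simpa [hxa, hu] using ha
  have hcu : ∀ a, 1 ≤ a → a < qq → cf a u = a := by
    intro a h1 h2
    rw [hag a h1 h2 u (huT a (by omega))]
    simp [hxa, hu]
  have hSS : ∀ a ∈ Finset.Ico 1 qq, ∀ b ∈ Finset.Ico 1 qq, a ≠ b → Disjoint (S a) (S b) := by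
    intro a ha b hb hab
    simp only [mem_Ico] at ha hb
    have hne : cf a ≠ cf b := by
      intro hcc
      apply hab
      rw [← hcu a ha.1 ha.2, ← hcu b hb.1 hb.2, hcc]
    have hdist := hC3 _ (hcf1 a ha.1 ha.2) _ (hcf1 b hb.1 hb.2) hne
    rw [myHammingDist_eq_card] at hdist
    have hsub : (univ.filter fun i => cf a i ≠ cf b i) ⊆ insert u (S a ∪ S b) := by
      intro i hi
      simp only [mem_filter, mem_univ, true_and] at hi
      by_cases hiu : i = u
      · simp [hiu]
      · by_cases hiT : i ∈ T
        · exfalso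
          have hx1 : xa 1 i ≠ 0 := by
            rw [hT] at hiT
            exact (mem_filter.mp hiT).2
          obtain j | v := i
          · have hxj : xa a (Sum.inl j) ≠ 0 := by
              simpa [hxa] using hx1
            have hxj' : xa b (Sum.inl j) ≠ 0 := by
              simpa [hxa] using hx1
            have e1 := hag a ha.1 ha.2 _ hxj
            have e2 := hag b hb.1 hb.2 _ hxj'
            apply hi
            rw [e1, e2]
            simp [hxa]
          · exact hiu (by simp [hu])
        · simp only [mem_insert, mem_union, hS, mem_sdiff, mem_filter, mem_univ, true_and]
          by_cases hca : cf a i = 0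
          · have : cf b i ≠ 0 := by intro hcb; exact hi (by rw [hca, hcb])
            exact Or.inr (Or.inr ⟨this, hiT⟩)
          · exact Or.inr (Or.inl ⟨hca, hiT⟩)
    have h1 : 2 * (k - t) + 1 ≤ (insert u (S a ∪ S b)).card :=
      le_trans hdist (card_le_card hsub)
    have h2 : (insert u (S a ∪ S b)).card ≤ (S a ∪ S b).card + 1 := card_insert_le _ _
    have h3 := card_union_add_card_inter (S a) (S b)
    have h4 := hScard a ha.1 ha.2
    have h5 := hScard b hb.1 hb.2
    have h6 : (S a ∩ S b).card = 0 := by omega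
    rw [card_eq_zero] at h6
    exact disjoint_iff_inter_eq_empty.mpr h6
  have hdTb : Disjoint T ((Finset.Ico 1 qq).biUnion S) := by
    rw [disjoint_biUnion_right]
    intro a _
    exact disjoint_sdiff
  have hbu : ((Finset.Ico 1 qq).biUnion S).card = (qq - 1) * (k - t) := by
    rw [card_biUnion hSS]
    rw [Finset.sum_congr rfl (fun a ha => hScard a (mem_Ico.mp ha).1 (mem_Ico.mp ha).2)]
    simp [Nat.card_Ico, mul_comm]
  have hfin : t + (qq - 1) * (k - t) ≤ m + 1 := by
    have hle := card_le_card (subset_univ (T ∪ (Finset.Ico 1 qq).biUnion S))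
    rw [card_union_of_disjoint hdTb, hTcard, hbu] at hle
    simpa using hle
  zify [show 1 ≤ qq by omega, htk] at hfin
  have hid : ((k : ℤ) - t) * qq + 2 * t - k = t + ((qq : ℤ) - 1) * ((k : ℤ) - t) := by ring
  linarith
end

section
/- Let e ≥ 1, let Q = Z_{q_1} × ⋯ × Z_{q_n} with all q_i ≥ 2, and let C be an e-perfect mixed code over Q that contains the all-zero word. Then the set { c ∈ C : c has Hamming weight 2e+1 } is a mixed Steiner system MS(e+1, 2e+1, Q). -/
/-- An `e`-perfect mixed code over the mixed alphabet described by `q : ι → ℕ`: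
a set of words such that every word of the space is at Hamming distance at most `e`
from exactly one codeword. -/
def IsPerfectMixedCode {ι : Type*} [Fintype ι] [DecidableEq ι] (q : ι → ℕ) (e : ℕ)
    (C : Set (ι → ℕ)) : Prop :=
  (∀ c ∈ C, ∀ i, c i < q i) ∧
  ∀ x : ι → ℕ, (∀ i, x i < q i) → ∃! c, c ∈ C ∧ hammingDist x c ≤ e

/-! A perfect code with packing radius `e` has minimum distance at least `2e+1`: otherwise some
word halfway between two codewords would lie within distance `e` of both. If `x` has weight
`e+1`, its codeword `c` within distance `e` is nonzero because `x` is at distance `e+1` from `0`,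
so `c` has weight at least `2e+1`; the triangle inequality through `x` forces weight exactly
`2e+1` and `d(x, c) = e`. -/

section HammingInterpolation

variable {ι α : Type*} [Fintype ι] [DecidableEq ι] [DecidableEq α]

theorem exists_between_of_le_hammingDist (x z : ι → α) {m : ℕ} (hm : m ≤ hammingDist x z) :
    ∃ y : ι → α, (∀ i, y i = x i ∨ y i = z i) ∧
      hammingDist x y = m ∧ hammingDist y z = hammingDist x z - m := by
  set S := Finset.univ.filter fun i => x i ≠ z i
  obtain ⟨T, hTS, rfl⟩ := Finset.exists_subset_card_eq (s := S) hm
  have hxz : ∀ i ∈ T, x i ≠ z i := fun i hi => (Finset.mem_filter.mp (hTS hi)).2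
  refine ⟨fun i => if i ∈ T then z i else x i, fun i => by dsimp only; split_ifs <;> simp, ?_, ?_⟩
  · show (Finset.univ.filter fun i => x i ≠ if i ∈ T then z i else x i).card = T.card
    congr 1
    ext i
    by_cases hi : i ∈ T <;> simp [hi, hxz]
  · show (Finset.univ.filter fun i => (if i ∈ T then z i else x i) ≠ z i).card = S.card - T.card
    rw [← Finset.card_sdiff_of_subset hTS]
    congr 1
    ext i
    by_cases hi : i ∈ T <;> simp [S, hi]

end HammingInterpolation

namespace IsPerfectMixedCode

variable {ι : Type*} [Fintype ι] [DecidableEq ι] {q : ι → ℕ} {e : ℕ} {C : Set (ι → ℕ)}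

theorem two_mul_add_one_le_hammingDist (hC : IsPerfectMixedCode q e C) {c c' : ι → ℕ}
    (hc : c ∈ C) (hc' : c' ∈ C) (hne : c ≠ c') : 2 * e + 1 ≤ hammingDist c c' := by
  by_contra! hlt
  obtain ⟨y, hy, hcy, hyc'⟩ :=
    exists_between_of_le_hammingDist c c' (Nat.sub_le (hammingDist c c') e)
  have hyq : ∀ i, y i < q i := fun i => by
    rcases hy i with h | h <;> rw [h]
    exacts [hC.1 c hc i, hC.1 c' hc' i]
  obtain ⟨z, -, huniq⟩ := hC.2 y hyq
  have hcz : c = z := huniq c ⟨hc, by rw [hammingDist_comm]; omega⟩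
  have hc'z : c' = z := huniq c' ⟨hc', by omega⟩
  exact hne (hcz.trans hc'z.symm)

theorem hammingDist_eq_and_hammingNorm_eq (hC : IsPerfectMixedCode q e C) (h0 : 0 ∈ C)
    {x c : ι → ℕ} (hx : hammingNorm x = e + 1) (hc : c ∈ C) (hxc : hammingDist x c ≤ e) :
    hammingDist x c = e ∧ hammingNorm c = 2 * e + 1 := by
  have hc0 : c ≠ 0 := by
    rintro rfl
    rw [hammingDist_zero_right] at hxc
    omega
  have hlower : 2 * e + 1 ≤ hammingNorm c := by
    simpa using hC.two_mul_add_one_le_hammingDist hc h0 hc0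
  have hupper : hammingNorm c ≤ hammingDist c x + hammingNorm x := by
    simpa using hammingDist_triangle c x 0
  rw [hammingDist_comm] at hupper
  omega

end IsPerfectMixedCode

theorem stmt9_general {n : ℕ} (q : Fin n → ℕ) (e : ℕ)
    (C : Set (Fin n → ℕ)) (hC : IsPerfectMixedCode q e C)
    (h0 : (fun _ => 0) ∈ C) :
    IsMixedSteiner q (e + 1) (2 * e + 1) {c ∈ C | hammingNorm c = 2 * e + 1} := by
  refine ⟨fun c hc => ⟨hC.1 c hc.1, hc.2⟩, fun x hx hxw => ?_, fun c hc c' hc' hne => ?_⟩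
  · obtain ⟨c, ⟨hc, hxc⟩, huniq⟩ := hC.2 x hx
    obtain ⟨hdist, hnorm⟩ := hC.hammingDist_eq_and_hammingNorm_eq h0 hxw hc hxc
    refine ⟨c, ⟨⟨hc, hnorm⟩, by omega⟩, fun c' ⟨⟨hc', _⟩, hxc'⟩ => huniq c' ⟨hc', ?_⟩⟩
    omega
  · rw [show 2 * e + 1 - (e + 1) = e by omega]
    exact hC.two_mul_add_one_le_hammingDist hc.1 hc'.1 hne

theorem stmt9 {n : ℕ} (q : Fin n → ℕ) (hq : ∀ i, 2 ≤ q i) (e : ℕ) (he : 1 ≤ e)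
    (C : Set (Fin n → ℕ)) (hC : IsPerfectMixedCode q e C)
    (h0 : (fun _ => 0) ∈ C) :
    IsMixedSteiner q (e + 1) (2 * e + 1) {c ∈ C | hammingNorm c = 2 * e + 1} :=
  stmt9_general q e C hC h0
end

section
/- Let q be a prime power, let m ≥ 1, and let T_1, T_2, …, T_n be F_q-linear subspaces of the field F_{q^m} (viewed as a vector space over F_q) such that the sets T_i ∖ {0} partition F_{q^m} ∖ {0} (i.e., every nonzero element of F_{q^m} lies in exactly one T_i). Define C = { (c_1,…,c_n) ∈ T_1 × ⋯ × T_n : c_1 + c_2 + ⋯ + c_n = 0 in F_{q^m} }. Then C is a 1-perfect code in T_1 × ⋯ × T_n: for every x ∈ T_1 × ⋯ × T_n there is exactly one c ∈ C with Hamming distance d(x,c) ≤ 1. -/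
/-- Theorem: a partition of the nonzero elements of `F_{q^m}` into (punctured)
`F_q`-subspaces yields a 1-perfect mixed code over the product of the subspaces. -/
theorem stmt10 (q m n : ℕ) (hq : IsPrimePow q) (hm : 1 ≤ m)
    (K F : Type*) [Field K] [Field F] [Algebra K F] [Fintype K] [Fintype F]
    [DecidableEq F]
    (hK : Fintype.card K = q) (hF : Fintype.card F = q ^ m)
    (T : Fin n → Submodule K F)
    (hpart : ∀ x : F, x ≠ 0 → ∃! i, x ∈ T i)
    (x : Fin n → F) (hx : ∀ i, x i ∈ T i) :
    ∃! c : Fin n → F,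
      ((∀ i, c i ∈ T i) ∧ ∑ i, c i = 0) ∧ hammingDist x c ≤ 1 := by
  classical
  set s := ∑ i, x i with hs
  -- any word within distance 1 of x is either x or differs at exactly one index
  have hdiff : ∀ c : Fin n → F, hammingDist x c ≤ 1 →
      c = x ∨ ∃ j, c j ≠ x j ∧ ∀ i, i ≠ j → c i = x i := by
    intro c hd
    rcases eq_or_ne c x with h | h
    · exact Or.inl h
    · right
      obtain ⟨j, hj⟩ : ∃ j, c j ≠ x j := by
        by_contra hc; push_neg at hc; exact h (funext hc)
      refine ⟨j, hj, fun i hi => ?_⟩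
      by_contra hci
      have hsub : ({i, j} : Finset (Fin n)) ⊆
          Finset.univ.filter (fun k => x k ≠ c k) := by
        intro k hk
        simp only [Finset.mem_insert, Finset.mem_singleton] at hk
        rcases hk with rfl | rfl <;>
          simp only [Finset.mem_filter, Finset.mem_univ, true_and]
        · exact fun h' => hci h'.symm
        · exact fun h' => hj h'.symm
      have := Finset.card_le_card hsub
      rw [Finset.card_insert_of_notMem (by simpa using hi), Finset.card_singleton] at this
      unfold hammingDist at hd
      omega
  -- sum formula for words differing from x only at j
  have hsum : ∀ (c : Fin n → F) (j : Fin n), (∀ i, i ≠ j → c i = x i) →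
      ∑ i, c i = s + (c j - x j) := by
    intro c j h
    have h1 : ∑ i, (c i - x i) = c j - x j :=
      Finset.sum_eq_single j (fun i _ hi => by rw [h i hi]; ring) (by simp)
    have h2 := Finset.sum_sub_distrib (f := c) (g := x) (s := Finset.univ)
    rw [h1] at h2
    linear_combination -h2
  by_cases h0 : s = 0
  · refine ⟨x, ⟨⟨hx, h0⟩, by simp⟩, ?_⟩
    rintro c ⟨⟨hcT, hcs⟩, hd⟩
    rcases hdiff c hd with h | ⟨j, hj, hrest⟩
    · exact h
    · exfalso
      have h2 := hsum c j hrest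
      rw [hcs] at h2
      exact hj (by linear_combination -h2 - h0)
  · obtain ⟨i₀, hi₀, huniq⟩ := hpart s h0
    refine ⟨Function.update x i₀ (x i₀ - s), ⟨⟨?_, ?_⟩, ?_⟩, ?_⟩
    · intro i
      rcases eq_or_ne i i₀ with rfl | h
      · rw [Function.update_self]
        exact (T i).sub_mem (hx i) hi₀
      · rw [Function.update_of_ne h]
        exact hx i
    · rw [hsum _ i₀ (fun i hi => Function.update_of_ne hi _ _)]
      rw [Function.update_self]; ring
    · have hsub : Finset.univ.filter
          (fun i => x i ≠ Function.update x i₀ (x i₀ - s) i) ⊆ ({i₀} : Finset (Fin n)) := by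
        intro k hk
        simp only [Finset.mem_filter, Finset.mem_univ, true_and] at hk
        simp only [Finset.mem_singleton]
        by_contra h
        exact hk (Function.update_of_ne h _ _).symm
      calc hammingDist x _ ≤ ({i₀} : Finset (Fin n)).card := Finset.card_le_card hsub
        _ = 1 := Finset.card_singleton _
    · rintro c ⟨⟨hcT, hcs⟩, hd⟩
      rcases hdiff c hd with rfl | ⟨j, hj, hrest⟩
      · exact absurd hcs h0
      · have hsj : x j - c j = s := by
          have h2 := hsum c j hrest
          rw [hcs] at h2
          linear_combination h2
        have hmem : x j - c j ∈ T j := (T j).sub_mem (hx j) (hcT j)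
        have hji : j = i₀ := huniq j (hsj ▸ hmem)
        subst hji
        funext i
        rcases eq_or_ne i j with rfl | h
        · rw [Function.update_self]
          linear_combination -hsj
        · rw [hrest i h, Function.update_of_ne h]
end

section
/- Let G be an abelian group and let G_1, G_2, …, G_n be subgroups of G such that the sets G_i ∖ {0} are nonempty and partition G ∖ {0} (i.e., every nonzero element of G lies in exactly one G_i). Define C = { (c_1,…,c_n) ∈ G_1 × ⋯ × G_n : c_1 + c_2 + ⋯ + c_n = 0 in G }. Then C is a 1-perfect code in G_1 × ⋯ × G_n: for every x ∈ G_1 × ⋯ × G_n there is exactly one c ∈ C with Hamming distance d(x,c) ≤ 1. -/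
/-- Theorem: a partition of the nonzero elements of an abelian group `G` into
(punctured) nontrivial subgroups yields a 1-perfect mixed code over the product
of the subgroups. -/
theorem stmt11 {G : Type*} [AddCommGroup G] [DecidableEq G] {n : ℕ}
    (Gi : Fin n → AddSubgroup G)
    (hne : ∀ i, ∃ x ∈ Gi i, x ≠ 0)
    (hpart : ∀ x : G, x ≠ 0 → ∃! i, x ∈ Gi i)
    (x : Fin n → G) (hx : ∀ i, x i ∈ Gi i) :
    ∃! c : Fin n → G,
      ((∀ i, c i ∈ Gi i) ∧ ∑ i, c i = 0) ∧ hammingDist x c ≤ 1 := by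
  classical
  set s := ∑ i, x i with hsdef
  -- key: for any admissible c, the sum of differences over the differing set is -s
  have key : ∀ c : Fin n → G, (∑ i, c i = 0) →
      ∑ i ∈ Finset.univ.filter (fun i => x i ≠ c i), (c i - x i) = -s := by
    intro c hc
    have h1 : ∑ i ∈ Finset.univ.filter (fun i => x i ≠ c i), (c i - x i)
        = ∑ i, (c i - x i) := by
      refine Finset.sum_subset (Finset.filter_subset _ _) ?_
      intro i _ hi
      simp only [Finset.mem_filter, Finset.mem_univ, true_and, not_not] at hi
      simp [hi]
    rw [h1, Finset.sum_sub_distrib, hc, ← hsdef, zero_sub]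
  by_cases hs : s = 0
  · refine ⟨x, ⟨⟨hx, hs⟩, by simp [hammingDist]⟩, ?_⟩
    rintro c ⟨⟨hc, hcs⟩, hd⟩
    have hk := key c hcs
    rw [hs, neg_zero] at hk
    by_contra hne'
    have : ∃ k, x k ≠ c k := by
      by_contra h
      push_neg at h
      exact hne' (funext fun i => (h i).symm)
    obtain ⟨k, hkk⟩ := this
    have hDcard : (Finset.univ.filter (fun i => x i ≠ c i)).card = 1 := by
      have h1 : 1 ≤ (Finset.univ.filter (fun i => x i ≠ c i)).card :=
        Finset.card_pos.mpr ⟨k, by simpa using hkk⟩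
      have h2 : (Finset.univ.filter (fun i => x i ≠ c i)).card ≤ 1 := hd
      omega
    obtain ⟨m, hm⟩ := Finset.card_eq_one.mp hDcard
    rw [hm, Finset.sum_singleton] at hk
    have hmm : x m ≠ c m := by
      have : m ∈ Finset.univ.filter (fun i => x i ≠ c i) := hm ▸ Finset.mem_singleton_self m
      simpa using this
    exact hmm (sub_eq_zero.mp hk).symm
  · obtain ⟨j, hj, hjuniq⟩ := hpart s hs
    refine ⟨Function.update x j (x j - s), ⟨⟨?_, ?_⟩, ?_⟩, ?_⟩
    · intro i
      rcases eq_or_ne i j with rfl | h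
      · simpa using sub_mem (hx i) hj
      · simpa [Function.update_of_ne h] using hx i
    · rw [Finset.sum_update_of_mem (Finset.mem_univ j)]
      have hjadd := Finset.add_sum_erase Finset.univ x (Finset.mem_univ j)
      rw [← hsdef] at hjadd
      have herase : ∑ i ∈ Finset.univ.erase j, x i = s - x j := eq_sub_of_add_eq' hjadd
      have hsd : (Finset.univ \ {j} : Finset (Fin n)) = Finset.univ.erase j := by
        ext k; simp [Finset.mem_erase, and_comm]
      rw [hsd, herase]
      abel
    · have hsub : Finset.univ.filter (fun i => x i ≠ Function.update x j (x j - s) i)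
          ⊆ {j} := by
        intro i hi
        simp only [Finset.mem_filter, Finset.mem_univ, true_and] at hi
        by_contra h
        simp only [Finset.mem_singleton] at h
        exact hi (by rw [Function.update_of_ne h])
      calc hammingDist x (Function.update x j (x j - s))
          = (Finset.univ.filter (fun i => x i ≠ Function.update x j (x j - s) i)).card := rfl
        _ ≤ ({j} : Finset (Fin n)).card := Finset.card_le_card hsub
        _ = 1 := Finset.card_singleton j
    · rintro c ⟨⟨hc, hcs⟩, hd⟩
      have hk := key c hcs
      have hDne : (Finset.univ.filter (fun i => x i ≠ c i)).Nonempty := by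
        rcases Finset.eq_empty_or_nonempty (Finset.univ.filter (fun i => x i ≠ c i)) with he | h
        · rw [he, Finset.sum_empty] at hk
          exact absurd (neg_eq_zero.mp hk.symm) hs
        · exact h
      have hDcard : (Finset.univ.filter (fun i => x i ≠ c i)).card = 1 := by
        have h1 := Finset.card_pos.mpr hDne
        have h2 : (Finset.univ.filter (fun i => x i ≠ c i)).card ≤ 1 := hd
        omega
      obtain ⟨m, hm⟩ := Finset.card_eq_one.mp hDcard
      rw [hm, Finset.sum_singleton] at hk
      -- c m - x m = -s, so -s ∈ G_m, so s ∈ G_m, so m = j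
      have hsm : s ∈ Gi m := by
        have : c m - x m ∈ Gi m := sub_mem (hc m) (hx m)
        rw [hk] at this
        simpa using neg_mem this
      have hmj : m = j := hjuniq m hsm
      subst hmj
      funext i
      rcases eq_or_ne i m with rfl | h
      · rw [Function.update_self]
        have hci : c i = x i - s := by
          rw [sub_eq_iff_eq_add] at hk
          rw [hk]; abel
        rw [hci]
      · rw [Function.update_of_ne h]
        by_contra hne2
        have hiD : i ∈ Finset.univ.filter (fun k => x k ≠ c k) := by
          simp only [Finset.mem_filter, Finset.mem_univ, true_and]
          exact fun h' => hne2 h'.symm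
        rw [hm, Finset.mem_singleton] at hiD
        exact h hiD
end

section
/- Let 2 ≤ t ≤ k, let Q = Z_{q_1} × ⋯ × Z_{q_n} with all q_i ≥ 2, and let q ≥ 2. If there exists a large set of mixed Steiner systems MS(t,k, Q × Z_q), where Q × Z_q is the mixed alphabet obtained by appending one coordinate over Z_q to Q, then there exists a large set of mixed Steiner systems MS(t−1, k−1, Q). -/
/-- A large set of mixed Steiner systems MS(t,k,Q): a collection of pairwise
disjoint mixed Steiner systems MS(t,k,Q) whose union is the set of all words of
Hamming weight `k` over the mixed alphabet. -/
def IsLargeSet {ι : Type*} [Fintype ι] [DecidableEq ι] (q : ι → ℕ) (t k : ℕ)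
    (L : Set (Set (ι → ℕ))) : Prop :=
  (∀ C ∈ L, IsMixedSteiner q t k C) ∧
  L.PairwiseDisjoint id ∧
  ⋃₀ L = {x : ι → ℕ | (∀ i, x i < q i) ∧ hammingNorm x = k}

/-!
Fix the appended coordinate to a nonzero symbol, say `1`. Since a word `x` of weight `t` and a codeword
`c` of weight `k` at distance `k - t` from it must agree on the support of `x`, the codeword
covering `(x, 1)` again ends in `1`; hence the codewords ending in `1`, with that coordinate
deleted, form an MS(t-1, k-1, Q), and deleting the coordinate maps the systems of a large set to
a large set.
-/

section Hamming

variable {ι κ β : Type*} [Fintype ι] [Fintype κ] [DecidableEq β]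

theorem hammingDist_sumElim (x x' : ι → β) (z z' : κ → β) :
    hammingDist (Sum.elim x z) (Sum.elim x' z') = hammingDist x x' + hammingDist z z' := by
  simp only [hammingDist, Finset.card_filter, Fintype.sum_sum_type, Sum.elim_inl, Sum.elim_inr]
  rfl

theorem hammingNorm_sumElim [Zero β] (x : ι → β) (z : κ → β) :
    hammingNorm (Sum.elim x z) = hammingNorm x + hammingNorm z := by
  simp only [hammingNorm, Finset.card_filter, Fintype.sum_sum_type, Sum.elim_inl, Sum.elim_inr]
  rfl

theorem hammingNorm_lt_hammingDist_add_hammingNorm [Zero β] {x c : ι → β} {i : ι}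
    (hx : x i ≠ 0) (hxc : x i ≠ c i) :
    hammingNorm c < hammingDist x c + hammingNorm x := by
  classical
  set A := Finset.univ.filter fun j => x j ≠ c j
  set B := Finset.univ.filter fun j => x j ≠ 0
  have hsub : Finset.univ.filter (fun j => c j ≠ 0) ⊆ A ∪ B := by
    intro j
    simp only [A, B, Finset.mem_filter, Finset.mem_union, Finset.mem_univ, true_and]
    intro hc
    by_cases h : x j = c j
    · exact Or.inr (h ▸ hc)
    · exact Or.inl h
  have hi : i ∈ A ∩ B := by simp [A, B, hx, hxc]
  calc hammingNorm c ≤ (A ∪ B).card := Finset.card_le_card hsub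
    _ < (A ∪ B).card + (A ∩ B).card := Nat.lt_add_of_pos_right (Finset.card_pos.2 ⟨i, hi⟩)
    _ = hammingDist x c + hammingNorm x := Finset.card_union_add_card_inter A B

theorem apply_eq_of_hammingDist_add_hammingNorm_eq [Zero β] {x c : ι → β} {i : ι}
    (h : hammingDist x c + hammingNorm x = hammingNorm c) (hx : x i ≠ 0) : c i = x i := by
  by_contra hne
  exact (hammingNorm_lt_hammingDist_add_hammingNorm hx (Ne.symm hne)).ne h.symm

end Hamming

section Derived

variable {ι κ : Type*} {q : ι → ℕ} {q' : κ → ℕ}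

theorem sumElim_lt_iff {x : ι → ℕ} {z : κ → ℕ} (hzq : ∀ j, z j < q' j) :
    (∀ i, Sum.elim x z i < Sum.elim q q' i) ↔ ∀ i, x i < q i := by
  simp [Sum.forall, hzq]

variable [Fintype ι] [DecidableEq ι] [Fintype κ] [DecidableEq κ] {t k : ℕ} {z : κ → ℕ}

def derivedAt (z : κ → ℕ) (C : Set (ι ⊕ κ → ℕ)) : Set (ι → ℕ) :=
  (Sum.elim · z) ⁻¹' C

theorem IsMixedSteiner.derivedAt {C : Set (ι ⊕ κ → ℕ)}
    (hC : IsMixedSteiner (Sum.elim q q') t k C) (hz : ∀ j, z j ≠ 0) (hzq : ∀ j, z j < q' j)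
    (hzt : hammingNorm z ≤ t) (htk : t ≤ k) :
    IsMixedSteiner q (t - hammingNorm z) (k - hammingNorm z) (derivedAt z C) := by
  obtain ⟨hCwords, hCcover, hCdist⟩ := hC
  have hnorm (y : ι → ℕ) : hammingNorm (Sum.elim y z) = hammingNorm y + hammingNorm z :=
    hammingNorm_sumElim y z
  have hdist (y y' : ι → ℕ) : hammingDist (Sum.elim y z) (Sum.elim y' z) = hammingDist y y' := by
    rw [hammingDist_sumElim, hammingDist_self, add_zero]
  have hkt : k - hammingNorm z - (t - hammingNorm z) = k - t := by omega
  refine ⟨fun y hy => ?_, fun x hx hxt => ?_, fun y hy y' hy' hne => ?_⟩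
  · obtain ⟨hlt, hk⟩ := hCwords _ hy
    exact ⟨(sumElim_lt_iff hzq).1 hlt, by rw [hnorm] at hk; omega⟩
  · have hxz : hammingNorm (Sum.elim x z) = t := by rw [hnorm]; omega
    obtain ⟨c, ⟨hcC, hcd⟩, hcuniq⟩ := hCcover _ ((sumElim_lt_iff hzq).2 hx) hxz
    have hcz : c ∘ Sum.inr = z := funext fun j =>
      apply_eq_of_hammingDist_add_hammingNorm_eq (i := Sum.inr j)
        (by rw [hcd, hxz, (hCwords c hcC).2]; omega) (hz j)
    have hc : Sum.elim (c ∘ Sum.inl) z = c := hcz ▸ Sum.elim_comp_inl_inr c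
    refine ⟨c ∘ Sum.inl, ⟨hc ▸ hcC, ?_⟩, fun y ⟨hyC, hyd⟩ => ?_⟩
    · rw [hkt, ← hdist, hc, hcd]
    · rw [← hcuniq (Sum.elim y z) ⟨hyC, by rw [hdist, hyd, hkt]⟩, Sum.elim_comp_inl]
  · have := hCdist _ hy _ hy' fun h => hne (by simpa using congrArg (· ∘ Sum.inl) h)
    rw [hdist] at this
    omega

theorem IsLargeSet.derivedAt {L : Set (Set (ι ⊕ κ → ℕ))}
    (hL : IsLargeSet (Sum.elim q q') t k L) (hz : ∀ j, z j ≠ 0) (hzq : ∀ j, z j < q' j)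
    (hzt : hammingNorm z ≤ t) (htk : t ≤ k) :
    IsLargeSet q (t - hammingNorm z) (k - hammingNorm z) (derivedAt z '' L) := by
  obtain ⟨hLsteiner, hLdisj, hLunion⟩ := hL
  refine ⟨?_, ?_, ?_⟩
  · rintro _ ⟨C, hC, rfl⟩
    exact (hLsteiner C hC).derivedAt hz hzq hzt htk
  · rintro _ ⟨C, hC, rfl⟩ _ ⟨C', hC', rfl⟩ hne
    exact (hLdisj hC hC' fun h => hne (h ▸ rfl)).preimage _
  · simp only [Set.sUnion_image, _root_.derivedAt]
    rw [← Set.preimage_sUnion, hLunion]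
    ext y
    simp only [Set.mem_preimage, Set.mem_ofPred_eq, sumElim_lt_iff hzq, hammingNorm_sumElim]
    exact and_congr_right fun _ => by omega

end Derived

theorem stmt13_general {n : ℕ} (q : Fin n → ℕ) (qq t k : ℕ)
    (ht : 2 ≤ t) (htk : t ≤ k) (hqq : 2 ≤ qq)
    (h : ∃ L : Set (Set (Fin n ⊕ Unit → ℕ)),
        IsLargeSet (Sum.elim q fun _ => qq) t k L) :
    ∃ L' : Set (Set (Fin n → ℕ)), IsLargeSet q (t - 1) (k - 1) L' := by
  obtain ⟨L, hL⟩ := h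
  have hweight : hammingNorm (fun _ : Unit => 1) = 1 := by decide
  refine ⟨derivedAt (fun _ : Unit => 1) '' L, ?_⟩
  simpa only [hweight] using
    hL.derivedAt (fun _ => one_ne_zero) (fun _ => hqq) (by rw [hweight]; omega) htk

theorem stmt13 {n : ℕ} (q : Fin n → ℕ) (hq : ∀ i, 2 ≤ q i) (qq t k : ℕ)
    (ht : 2 ≤ t) (htk : t ≤ k) (hqq : 2 ≤ qq)
    (h : ∃ L : Set (Set (Fin n ⊕ Unit → ℕ)),
        IsLargeSet (Sum.elim q fun _ => qq) t k L) :
    ∃ L' : Set (Set (Fin n → ℕ)), IsLargeSet q (t - 1) (k - 1) L' :=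
  stmt13_general q qq t k ht htk hqq h
end

section
/- Let Q = Z_{q_1} × ⋯ × Z_{q_n} with 2 ≤ q_1 ≤ q_2 ≤ ⋯ ≤ q_n and with not all q_i equal, and let 1 ≤ t < k ≤ n. Then there does not exist a large set of mixed Steiner systems MS(t,k,Q). -/
open Finset

section Hamming

variable {ι κ β : Type*} [Fintype ι] [Fintype κ] [DecidableEq β]

theorem hammingDist_comp_equiv (e : ι ≃ κ) (x y : κ → β) :
    hammingDist (x ∘ e) (y ∘ e) = hammingDist x y :=
  card_equiv e (by simp)

variable [Zero β]

theorem hammingNorm_comp_equiv (e : ι ≃ κ) (x : κ → β) :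
    hammingNorm (x ∘ e) = hammingNorm x :=
  card_equiv e (by simp)

theorem apply_eq_of_hammingDist_eq_sub [DecidableEq ι] {t k : ℕ} {x c : ι → β}
    (hx : hammingNorm x = t) (hc : hammingNorm c = k) (hxc : hammingDist x c = k - t) {i : ι}
    (hi : x i ≠ 0) : c i = x i := by
  unfold hammingNorm at hx hc
  unfold hammingDist at hxc
  by_contra hci
  set X : Finset ι := {j | x j ≠ 0}
  set D : Finset ι := {j | x j ≠ c j}
  -- otherwise `k ≤ #(X.erase i) + #D = (t - 1) + (k - t)`
  have hsupp : ({j | c j ≠ 0} : Finset ι) ⊆ X.erase i ∪ D := by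
    intro j hj
    simp only [X, D, mem_union, mem_erase, mem_filter, mem_univ, true_and] at hj ⊢
    by_cases hxj : x j = c j
    · exact Or.inl ⟨by rintro rfl; exact hci hxj.symm, hxj ▸ hj⟩
    · exact Or.inr hxj
  have hiX : i ∈ X := by simpa [X] using hi
  have hiD : i ∈ D := by simpa [D] using Ne.symm hci
  have h1 := card_le_card hsupp
  have h2 := card_union_le (X.erase i) D
  have h3 := card_erase_add_one hiX
  have h4 := card_pos.2 ⟨i, hiD⟩
  omega

end Hamming

section LargeSet

variable {ι : Type*} [Fintype ι] {q : ι → ℕ} {t k : ℕ}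

def coveringWords (q : ι → ℕ) (t k : ℕ) (z : ι → ℕ) : Set (ι → ℕ) :=
  {c | (∀ i, c i < q i) ∧ hammingNorm c = k ∧ hammingDist z c = k - t}

theorem coveringWords_finite (z : ι → ℕ) : (coveringWords q t k z).Finite :=
  (Set.Finite.pi' fun i => Set.finite_Iio (q i)).subset fun _ hc => hc.1

variable [DecidableEq ι]

theorem IsLargeSet.ncard_eq_ncard_coveringWords {L : Set (Set (ι → ℕ))}
    (hL : IsLargeSet q t k L) {z : ι → ℕ} (hzq : ∀ i, z i < q i) (hzt : hammingNorm z = t) :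
    L.ncard = (coveringWords q t k z).ncard := by
  obtain ⟨hsteiner, hdisj, hunion⟩ := hL
  have hcover := fun C hC => ((hsteiner C hC).2.1 z hzq hzt).exists
  refine Set.ncard_congr (fun C hC => (hcover C hC).choose) (fun C hC => ?_)
    (fun C C' hC hC' hcC => ?_) (fun c hc => ?_)
  · obtain ⟨hcC, hzc⟩ := (hcover C hC).choose_spec
    exact ⟨((hsteiner C hC).1 _ hcC).1, ((hsteiner C hC).1 _ hcC).2, hzc⟩
  · by_contra hCC'
    exact Set.disjoint_left.1 (hdisj hC hC' hCC') (hcover C hC).choose_spec.1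
      (hcC ▸ (hcover C' hC').choose_spec.1)
  · have hc' : c ∈ ⋃₀ L := hunion ▸ ⟨hc.1, hc.2.1⟩
    obtain ⟨C, hC, hcC⟩ := hc'
    exact ⟨C, hC,
      ((hsteiner C hC).2.1 z hzq hzt).unique (hcover C hC).choose_spec ⟨hcC, hc.2.2⟩⟩

variable {x : ι → ℕ} {a b : ι}

theorem comp_swap_mem_coveringWords (hqab : q a ≤ q b) (hxt : hammingNorm x = t)
    (hxa : x a < q a) (hxa0 : x a ≠ 0) {c : ι → ℕ}
    (hc : c ∈ coveringWords q t k (x ∘ Equiv.swap a b)) :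
    c ∘ Equiv.swap a b ∈ coveringWords q t k x := by
  obtain ⟨hcq, hck, hdist⟩ := hc
  have hcb : c b = x a := by
    simpa using apply_eq_of_hammingDist_eq_sub (x := x ∘ Equiv.swap a b) (i := b)
      ((hammingNorm_comp_equiv _ x).trans hxt) hck hdist (by simpa using hxa0)
  refine ⟨fun i => ?_, (hammingNorm_comp_equiv _ c).trans hck, ?_⟩
  · rcases eq_or_ne i a with rfl | hia
    · simpa [hcb] using hxa
    rcases eq_or_ne i b with rfl | hib
    · simpa using (hcq a).trans_le hqab
    · simpa [Equiv.swap_apply_of_ne_of_ne hia hib] using hcq i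
  · have hxx : (x ∘ Equiv.swap a b) ∘ Equiv.swap a b = x := by ext; simp
    have hswap := hammingDist_comp_equiv (Equiv.swap a b) (x ∘ Equiv.swap a b) c
    rw [hxx] at hswap
    exact hswap.trans hdist

theorem ncard_coveringWords_comp_swap_lt (hqab : q a ≤ q b) (hxt : hammingNorm x = t)
    (hxa : x a < q a) (hxa0 : x a ≠ 0) {c₀ : ι → ℕ} (hc₀ : c₀ ∈ coveringWords q t k x)
    (hc₀b : q a ≤ c₀ b) :
    (coveringWords q t k (x ∘ Equiv.swap a b)).ncard < (coveringWords q t k x).ncard := by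
  have hinj : Function.Injective fun c : ι → ℕ => c ∘ Equiv.swap a b :=
    (Equiv.swap a b).surjective.injective_comp_right
  have hsub : (· ∘ Equiv.swap a b) '' coveringWords q t k (x ∘ Equiv.swap a b) ⊆
      coveringWords q t k x := by
    rintro _ ⟨c, hc, rfl⟩
    exact comp_swap_mem_coveringWords hqab hxt hxa hxa0 hc
  have hmiss : c₀ ∉ (· ∘ Equiv.swap a b) '' coveringWords q t k (x ∘ Equiv.swap a b) := by
    rintro ⟨c, hc, rfl⟩
    exact (hc₀b.trans_lt (by simpa using hc.1 a)).false
  rw [← hinj.injOn.ncard_image]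
  exact Set.ncard_lt_ncard ((Set.ssubset_iff_of_subset hsub).2 ⟨c₀, hc₀, hmiss⟩)
    (coveringWords_finite x)

/-- `x` is the indicator of a `t`-set `S ∋ a` avoiding `b`, and the covering word is the
indicator of a `k`-set `T ⊇ S ∪ {b}` with its letter at `b` raised to `q b - 1`. -/
theorem exists_word_and_coveringWord (hq : ∀ i, 2 ≤ q i) (hab : a ≠ b) (ht : 1 ≤ t)
    (htk : t < k) (hk : k ≤ Fintype.card ι) :
    ∃ x : ι → ℕ, (∀ i, x i ≤ 1) ∧ hammingNorm x = t ∧ x a ≠ 0 ∧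
      ∃ c ∈ coveringWords q t k x, c b = q b - 1 := by
  obtain ⟨S, haS, hSb, hS⟩ := exists_subsuperset_card_eq (s := {a}) (t := univ.erase b)
    (by simpa using hab) (by simpa using ht)
    (by rw [card_erase_of_mem (mem_univ b), card_univ]; omega)
  have hbS : b ∉ S := fun h => by simpa using hSb h
  obtain ⟨T, hST, -, hT⟩ := exists_subsuperset_card_eq (subset_univ (insert b S))
    (by rw [card_insert_of_notMem hbS]; omega) hk
  have hSTsub : S ⊆ T := (subset_insert b S).trans hST
  refine ⟨fun i => if i ∈ S then 1 else 0, fun i => by dsimp only; split_ifs <;> omega, ?_,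
    by simpa using haS, fun i => if i = b then q b - 1 else if i ∈ T then 1 else 0,
    ⟨fun i => ?_, ?_, ?_⟩, by simp⟩
  · rw [← hS]
    unfold hammingNorm
    congr 1
    ext i
    simp
  · rcases eq_or_ne i b with rfl | hib
    · have := hq i
      simp only [if_true]
      omega
    · simp only [if_neg hib]
      split_ifs <;> have := hq i <;> omega
  · rw [← hT]
    unfold hammingNorm
    congr 1
    ext i
    rcases eq_or_ne i b with rfl | hib
    · have := hq i
      simp [hST (mem_insert_self i S)]
      omega
    · simp [hib]
  · rw [← hS, ← hT, ← card_sdiff_of_subset hSTsub]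
    unfold hammingDist
    congr 1
    ext i
    rcases eq_or_ne i b with rfl | hib
    · have := hq i
      simp [hST (mem_insert_self i S), hbS]
      omega
    · by_cases hiS : i ∈ S
      · simp [hib, hiS, hSTsub hiS]
      · simp [hib, hiS]

theorem not_exists_isLargeSet (hq : ∀ i, 2 ≤ q i) (hne : ∃ i j, q i ≠ q j) (ht : 1 ≤ t)
    (htk : t < k) (hk : k ≤ Fintype.card ι) : ¬∃ L : Set (Set (ι → ℕ)), IsLargeSet q t k L := by
  rintro ⟨L, hL⟩
  obtain ⟨a, b, hab⟩ : ∃ a b, q a < q b := by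
    obtain ⟨i, j, hij⟩ := hne
    rcases hij.lt_or_gt with h | h
    exacts [⟨i, j, h⟩, ⟨j, i, h⟩]
  obtain ⟨x, hx1, hxt, hxa, c, hc, hcb⟩ :=
    exists_word_and_coveringWord hq (ne_of_apply_ne q hab.ne) ht htk hk
  have hxq (i : ι) : x i < q i := (hx1 i).trans_lt (hq i)
  have hyq (i : ι) : (x ∘ Equiv.swap a b) i < q i := (hx1 _).trans_lt (hq i)
  have hyt : hammingNorm (x ∘ Equiv.swap a b) = t := (hammingNorm_comp_equiv _ x).trans hxt
  have hlt := ncard_coveringWords_comp_swap_lt hab.le hxt (hxq a) hxa hc (by omega)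
  rw [← hL.ncard_eq_ncard_coveringWords hxq hxt,
    ← hL.ncard_eq_ncard_coveringWords hyq hyt] at hlt
  exact hlt.false

end LargeSet

theorem stmt14_general {n : ℕ} (q : Fin n → ℕ) (hq2 : ∀ i, 2 ≤ q i)
    (hne : ∃ i j, q i ≠ q j) (t k : ℕ) (ht : 1 ≤ t) (htk : t < k) (hkn : k ≤ n) :
    ¬∃ L : Set (Set (Fin n → ℕ)), IsLargeSet q t k L :=
  not_exists_isLargeSet hq2 hne ht htk (by simpa using hkn)

theorem stmt14 {n : ℕ} (q : Fin n → ℕ) (hq2 : ∀ i, 2 ≤ q i) (hmono : Monotone q)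
    (hne : ∃ i j, q i ≠ q j) (t k : ℕ) (ht : 1 ≤ t) (htk : t < k) (hkn : k ≤ n) :
    ¬∃ L : Set (Set (Fin n → ℕ)), IsLargeSet q t k L :=
  stmt14_general q hq2 hne t k ht htk hkn
end

section
/- If there exists an (n,r)-pairs-triples design with 1 ≤ r < n−1, then there exists a mixed Steiner system MS(2,3, Z_2^n × Z_{r+1}). -/
/-- A one-factor on `Fin n`: a perfect matching of the complete graph on `Fin n`,
i.e. a collection of 2-element subsets such that every vertex lies in exactly one
of them. -/
def IsOneFactor (n : ℕ) (T : Set (Finset (Fin n))) : Prop :=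
  (∀ p ∈ T, p.card = 2) ∧ ∀ v : Fin n, ∃! p, p ∈ T ∧ v ∈ p

/-- An `(n,r)`-pairs-triples design: `r` pairwise disjoint one-factors
`T 1, …, T r` on `Fin n` together with a set `R` of triples of `Fin n` such that
every pair of `Fin n` is covered exactly once: either it belongs to exactly one
one-factor and to no triple of `R`, or it belongs to no one-factor and is contained
in exactly one triple of `R`. -/
def IsPairsTriplesDesign (n r : ℕ) (T : Fin r → Set (Finset (Fin n)))
    (R : Set (Finset (Fin n))) : Prop :=
  (∀ i, IsOneFactor n (T i)) ∧
  (∀ i j, i ≠ j → Disjoint (T i) (T j)) ∧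
  (∀ b ∈ R, b.card = 3) ∧
  (∀ p : Finset (Fin n), p.card = 2 →
    ((∃! i, p ∈ T i) ∧ ¬∃ b ∈ R, p ⊆ b) ∨
      ((∀ i, p ∉ T i) ∧ ∃! b, b ∈ R ∧ p ⊆ b))

open Finset
open scoped symmDiff

theorem Finset.card_symmDiff_add_two_mul_card_inter {α : Type*} [DecidableEq α]
    (s t : Finset α) : #(s ∆ t) + 2 * #(s ∩ t) = #s + #t := by
  have hunion := card_union_add_card_inter s t
  have hle := card_le_card (inter_subset_union (s := s) (t := t))
  rw [symmDiff_eq_sup_sdiff_inf, sup_eq_union, inf_eq_inter,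
    card_sdiff_of_subset inter_subset_union]
  omega

theorem Finset.card_inter_lt_card_left_of_not_subset {α : Type*} [DecidableEq α]
    {s t : Finset α} (h : ¬s ⊆ t) : #(s ∩ t) < #s :=
  card_lt_card (ssubset_iff_subset_ne.2 ⟨inter_subset_left, fun he => h (inter_eq_left.1 he)⟩)

section Hamming

variable {α γ β : Type*} [Fintype α] [Fintype γ] [DecidableEq β]

theorem hammingDist_sumElim_s15 (f f' : α → β) (g g' : γ → β) :
    hammingDist (Sum.elim f g) (Sum.elim f' g') = hammingDist f f' + hammingDist g g' := by
  simp only [hammingDist, card_filter, Fintype.sum_sum_type, Sum.elim_inl, Sum.elim_inr]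
  rfl

theorem hammingDist_unit (a b : β) :
    hammingDist (fun _ : Unit => a) (fun _ => b) = if a = b then 0 else 1 := by
  by_cases h : a = b <;> simp [hammingDist, h]

theorem hammingDist_indicator [DecidableEq α] (s t : Finset α) :
    hammingDist (fun v => if v ∈ s then (1 : ℕ) else 0) (fun v => if v ∈ t then 1 else 0) =
      #(s ∆ t) := by
  unfold hammingDist
  congr 1
  ext v
  by_cases hs : v ∈ s <;> by_cases ht : v ∈ t <;> simp [hs, ht, mem_symmDiff]

end Hamming

section MixedWord

variable {α : Type*} [DecidableEq α]

def mixedWord (s : Finset α) (m : ℕ) : α ⊕ Unit → ℕ :=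
  Sum.elim (fun v => if v ∈ s then 1 else 0) (fun _ => m)

theorem hammingDist_mixedWord [Fintype α] (s t : Finset α) (m m' : ℕ) :
    hammingDist (mixedWord s m) (mixedWord t m') = #(s ∆ t) + if m = m' then 0 else 1 := by
  rw [mixedWord, mixedWord, hammingDist_sumElim_s15, hammingDist_indicator, hammingDist_unit]

theorem hammingDist_mixedWord_add_two_mul_card_inter [Fintype α] (s t : Finset α) (m m' : ℕ) :
    hammingDist (mixedWord s m) (mixedWord t m') + 2 * #(s ∩ t) =
      #s + #t + if m = m' then 0 else 1 := by
  rw [hammingDist_mixedWord, ← card_symmDiff_add_two_mul_card_inter]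
  ring

theorem mixedWord_empty_zero : mixedWord (∅ : Finset α) 0 = 0 := by
  funext i
  cases i <;> simp [mixedWord]

theorem hammingNorm_mixedWord [Fintype α] (s : Finset α) (m : ℕ) :
    hammingNorm (mixedWord s m) = #s + if m = 0 then 0 else 1 := by
  rw [← hammingDist_zero_right, ← mixedWord_empty_zero, hammingDist_mixedWord, ← bot_eq_empty,
    symmDiff_bot]

theorem mixedWord_lt {q m : ℕ} (hm : m < q) (s : Finset α) (i : α ⊕ Unit) :
    mixedWord s m i < Sum.elim (fun _ => 2) (fun _ => q) i := by
  rcases i with v | _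
  · simp only [mixedWord, Sum.elim_inl]
    split <;> omega
  · exact hm

theorem eq_mixedWord_of_lt [Fintype α] {q : ℕ} {x : α ⊕ Unit → ℕ}
    (hx : ∀ i, x i < Sum.elim (fun _ => 2) (fun _ => q) i) :
    x = mixedWord {v | x (.inl v) = 1} (x (.inr ())) := by
  funext i
  rcases i with v | _
  · have hv := hx (.inl v)
    simp only [Sum.elim_inl] at hv
    simp only [mixedWord, Sum.elim_inl, mem_filter, mem_univ, true_and]
    split <;> omega
  · rfl

end MixedWord

theorem IsMixedSteiner.of_exists {ι : Type*} [Fintype ι] [DecidableEq ι] {q : ι → ℕ}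
    {t k : ℕ} {C : Set (ι → ℕ)} (hC : ∀ c ∈ C, (∀ i, c i < q i) ∧ hammingNorm c = k)
    (hcover : ∀ x : ι → ℕ, (∀ i, x i < q i) → hammingNorm x = t →
      ∃ c ∈ C, hammingDist x c = k - t)
    (hdist : ∀ c ∈ C, ∀ c' ∈ C, c ≠ c' → 2 * (k - t) + 1 ≤ hammingDist c c') :
    IsMixedSteiner q t k C := by
  refine ⟨hC, fun x hx hxt => ?_, hdist⟩
  obtain ⟨c, hc, hxc⟩ := hcover x hx hxt
  refine ⟨c, ⟨hc, hxc⟩, fun c' ⟨hc', hxc'⟩ => ?_⟩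
  by_contra hne
  have hfar := hdist c' hc' c hc hne
  have htri := hammingDist_triangle c' x c
  rw [hammingDist_comm c' x] at htri
  omega

theorem IsOneFactor.disjoint_of_ne {n : ℕ} {T : Set (Finset (Fin n))} (hT : IsOneFactor n T)
    {p p' : Finset (Fin n)} (hp : p ∈ T) (hp' : p' ∈ T) (hne : p ≠ p') : Disjoint p p' := by
  rw [disjoint_left]
  intro v hv hv'
  obtain ⟨_, _, huniq⟩ := hT.2 v
  exact hne ((huniq p ⟨hp, hv⟩).trans (huniq p' ⟨hp', hv'⟩).symm)

def designCode {α : Type*} [DecidableEq α] {r : ℕ} (T : Fin r → Set (Finset α))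
    (R : Set (Finset α)) : Set (α ⊕ Unit → ℕ) :=
  (mixedWord · 0) '' R ∪ ⋃ i : Fin r, (mixedWord · (i + 1)) '' T i

namespace IsPairsTriplesDesign

variable {n r : ℕ} {T : Fin r → Set (Finset (Fin n))} {R : Set (Finset (Fin n))}

theorem card_eq_two (hD : IsPairsTriplesDesign n r T R) {i : Fin r} {p : Finset (Fin n)}
    (hp : p ∈ T i) : #p = 2 :=
  (hD.1 i).1 p hp

theorem not_subset_triple (hD : IsPairsTriplesDesign n r T R) {i : Fin r}
    {p b : Finset (Fin n)} (hp : p ∈ T i) (hb : b ∈ R) : ¬p ⊆ b := by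
  rcases hD.2.2.2 p (hD.card_eq_two hp) with ⟨_, hno⟩ | ⟨hno, _⟩
  · exact fun hpb => hno ⟨b, hb, hpb⟩
  · exact absurd hp (hno i)

theorem card_inter_triples_le_one (hD : IsPairsTriplesDesign n r T R) {b b' : Finset (Fin n)}
    (hb : b ∈ R) (hb' : b' ∈ R) (hne : b ≠ b') : #(b ∩ b') ≤ 1 := by
  by_contra! hc
  obtain ⟨q, hq, hq2⟩ := exists_subset_card_eq (show 2 ≤ #(b ∩ b') by omega)
  have hqb : q ⊆ b := hq.trans inter_subset_left
  have hqb' : q ⊆ b' := hq.trans inter_subset_right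
  rcases hD.2.2.2 q hq2 with ⟨_, hno⟩ | ⟨_, _, _, huniq⟩
  · exact hno ⟨b, hb, hqb⟩
  · exact hne ((huniq b ⟨hb, hqb⟩).trans (huniq b' ⟨hb', hqb'⟩).symm)

theorem designCode_lt_and_hammingNorm_eq_three (hD : IsPairsTriplesDesign n r T R) :
    ∀ c ∈ designCode T R,
      (∀ i, c i < Sum.elim (fun _ => 2) (fun _ => r + 1) i) ∧ hammingNorm c = 3 := by
  rintro c (⟨b, hb, rfl⟩ | ⟨_, ⟨i, rfl⟩, p, hp, rfl⟩)
  · exact ⟨mixedWord_lt (Nat.succ_pos r) b, by simp [hammingNorm_mixedWord, hD.2.2.1 b hb]⟩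
  · exact ⟨mixedWord_lt (by omega) p, by simp [hammingNorm_mixedWord, hD.card_eq_two hp]⟩

theorem exists_mem_designCode_hammingDist_eq_one_of_card_eq_two
    (hD : IsPairsTriplesDesign n r T R) {s : Finset (Fin n)} (hs : #s = 2) :
    ∃ c ∈ designCode T R, hammingDist (mixedWord s 0) c = 1 := by
  rcases hD.2.2.2 s hs with ⟨⟨i, hsi, _⟩, _⟩ | ⟨_, b, ⟨hb, hsb⟩, _⟩
  · refine ⟨mixedWord s (i + 1), Or.inr (Set.mem_iUnion.2 ⟨i, s, hsi, rfl⟩), ?_⟩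
    simp [hammingDist_mixedWord]
  · refine ⟨mixedWord b 0, Or.inl ⟨b, hb, rfl⟩, ?_⟩
    rw [hammingDist_mixedWord, symmDiff_of_le hsb, card_sdiff_of_subset hsb, hD.2.2.1 b hb, hs]
    rfl

theorem exists_mem_designCode_hammingDist_singleton_eq_one
    (hD : IsPairsTriplesDesign n r T R) (v : Fin n) {m : ℕ} (hm0 : m ≠ 0) (hm : m < r + 1) :
    ∃ c ∈ designCode T R, hammingDist (mixedWord {v} m) c = 1 := by
  set i : Fin r := ⟨m - 1, by omega⟩
  have him : (i : ℕ) + 1 = m := Nat.sub_add_cancel (Nat.pos_of_ne_zero hm0)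
  obtain ⟨p, ⟨hp, hvp⟩, _⟩ := (hD.1 i).2 v
  have hvp' : {v} ⊆ p := singleton_subset_iff.2 hvp
  refine ⟨mixedWord p m, Or.inr (Set.mem_iUnion.2 ⟨i, p, hp, by rw [him]⟩), ?_⟩
  rw [hammingDist_mixedWord, symmDiff_of_le hvp', card_sdiff_of_subset hvp', hD.card_eq_two hp,
    card_singleton, if_pos rfl]

theorem exists_mem_designCode_hammingDist_eq_one (hD : IsPairsTriplesDesign n r T R)
    (x : Fin n ⊕ Unit → ℕ) (hx : ∀ i, x i < Sum.elim (fun _ => 2) (fun _ => r + 1) i)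
    (hx2 : hammingNorm x = 2) : ∃ c ∈ designCode T R, hammingDist x c = 3 - 2 := by
  rw [eq_mixedWord_of_lt hx] at hx2 ⊢
  set s : Finset (Fin n) := {v | x (.inl v) = 1}
  rw [hammingNorm_mixedWord] at hx2
  by_cases hm : x (.inr ()) = 0
  · rw [if_pos hm] at hx2
    rw [hm]
    exact hD.exists_mem_designCode_hammingDist_eq_one_of_card_eq_two hx2
  · rw [if_neg hm] at hx2
    obtain ⟨v, hv⟩ := card_eq_one.1 (show #s = 1 by omega)
    rw [hv]
    exact hD.exists_mem_designCode_hammingDist_singleton_eq_one v hm (hx (.inr ()))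

theorem three_le_hammingDist_triple_pair (hD : IsPairsTriplesDesign n r T R) {i : Fin r}
    {b p : Finset (Fin n)} (hb : b ∈ R) (hp : p ∈ T i) :
    3 ≤ hammingDist (mixedWord b 0) (mixedWord p (i + 1)) := by
  have hdist := hammingDist_mixedWord_add_two_mul_card_inter b p 0 (i + 1)
  have hinter := card_inter_lt_card_left_of_not_subset (hD.not_subset_triple hp hb)
  rw [inter_comm, hD.card_eq_two hp] at hinter
  rw [hD.2.2.1 b hb, hD.card_eq_two hp, if_neg (Nat.succ_ne_zero i).symm] at hdist
  omega

theorem three_le_hammingDist_designCode (hD : IsPairsTriplesDesign n r T R) :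
    ∀ c ∈ designCode T R, ∀ c' ∈ designCode T R, c ≠ c' →
      2 * (3 - 2) + 1 ≤ hammingDist c c' := by
  rintro c (⟨b, hb, rfl⟩ | ⟨_, ⟨i, rfl⟩, p, hp, rfl⟩)
    c' (⟨b', hb', rfl⟩ | ⟨_, ⟨j, rfl⟩, p', hp', rfl⟩) hne <;> dsimp only at hne ⊢
  · have hdist := hammingDist_mixedWord_add_two_mul_card_inter b b' 0 0
    have hinter := hD.card_inter_triples_le_one hb hb' (fun h => hne (h ▸ rfl))
    rw [hD.2.2.1 b hb, hD.2.2.1 b' hb', if_pos rfl] at hdist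
    omega
  · exact hD.three_le_hammingDist_triple_pair hb hp'
  · exact hammingDist_comm (mixedWord p (i + 1)) _ ▸ hD.three_le_hammingDist_triple_pair hb' hp
  · have hdist := hammingDist_mixedWord_add_two_mul_card_inter p p' (i + 1) (j + 1)
    rw [hD.card_eq_two hp, hD.card_eq_two hp'] at hdist
    by_cases hij : i = j
    · subst hij
      have hpp : p ≠ p' := fun h => hne (h ▸ rfl)
      rw [disjoint_iff_inter_eq_empty.1 ((hD.1 i).disjoint_of_ne hp hp' hpp), card_empty,
        if_pos rfl] at hdist
      omega
    · have hpp : ¬p ⊆ p' := fun h =>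
        Set.disjoint_left.1 (hD.2.1 i j hij) hp
          (eq_of_subset_of_card_le h (by rw [hD.card_eq_two hp, hD.card_eq_two hp']) ▸ hp')
      have hinter := card_inter_lt_card_left_of_not_subset hpp
      rw [hD.card_eq_two hp] at hinter
      rw [if_neg (by simpa [Fin.val_inj] using hij)] at hdist
      omega

theorem isMixedSteiner_designCode (hD : IsPairsTriplesDesign n r T R) :
    IsMixedSteiner (Sum.elim (fun _ => 2) (fun _ => r + 1)) 2 3 (designCode T R) :=
  .of_exists hD.designCode_lt_and_hammingNorm_eq_three hD.exists_mem_designCode_hammingDist_eq_one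
    hD.three_le_hammingDist_designCode

end IsPairsTriplesDesign

theorem stmt15_general {n r : ℕ}
    (h : ∃ (T : Fin r → Set (Finset (Fin n))) (R : Set (Finset (Fin n))),
        IsPairsTriplesDesign n r T R) :
    ∃ C : Set (Fin n ⊕ Unit → ℕ),
      IsMixedSteiner (Sum.elim (fun _ => 2) (fun _ => r + 1)) 2 3 C := by
  obtain ⟨T, R, hD⟩ := h
  exact ⟨designCode T R, hD.isMixedSteiner_designCode⟩

theorem stmt15 {n r : ℕ} (hr1 : 1 ≤ r) (hr2 : r < n - 1)
    (h : ∃ (T : Fin r → Set (Finset (Fin n))) (R : Set (Finset (Fin n))),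
        IsPairsTriplesDesign n r T R) :
    ∃ C : Set (Fin n ⊕ Unit → ℕ),
      IsMixedSteiner (Sum.elim (fun _ => 2) (fun _ => r + 1)) 2 3 C :=
  stmt15_general h
end

section
/- If there exists an (n,r)-pairs-triples design with 1 ≤ r < n−1, then n is even and r is odd; moreover, if n ≡ 2 (mod 6) or n ≡ 4 (mod 6), then r ≡ n−1 (mod 6). -/
/-!
The pairs of the one-factors together with the triples form a linear space: blocks of sizes
2 and 3 covering every pair exactly once. Counting the blocks through a vertex gives
`n - 1 = r + 2 k`, with `k` the number of triples through it, so `r` is odd. Counting all pairs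
gives `n (n - 1) / 2 = r n / 2 + 3 |R|`, i.e. `(n / 2) (n - 1 - r) = 3 |R|`. A single one-factor
already forces `n` to be even, and when `3 ∤ n` the even number `n - 1 - r` is also divisible
by `3`.
-/
open Finset

namespace Finset

variable {α : Type*} [Fintype α] [DecidableEq α]

/-- `B` is a linear space on `α`, i.e. a pairwise balanced design of index one. -/
def CoversPairsOnce (B : Finset (Finset α)) : Prop :=
  ∀ p : Finset α, #p = 2 → ∃! b, b ∈ B ∧ p ⊆ b

namespace CoversPairsOnce

variable {B : Finset (Finset α)} (hB : B.CoversPairsOnce)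
include hB

omit [Fintype α] [DecidableEq α] in
theorem eq_of_subset {p b b' : Finset α} (hp : #p = 2) (hb : b ∈ B) (hb' : b' ∈ B)
    (hpb : p ⊆ b) (hpb' : p ⊆ b') : b = b' :=
  (hB p hp).unique ⟨hb, hpb⟩ ⟨hb', hpb'⟩

theorem sum_card_choose_two : ∑ b ∈ B, (#b).choose 2 = (Fintype.card α).choose 2 := by
  have hcover : (univ : Finset α).powersetCard 2 = B.biUnion (powersetCard 2) := by
    ext p
    rw [mem_powersetCard_univ]
    simp only [mem_biUnion, mem_powersetCard]
    refine ⟨fun hp => ?_, fun ⟨_, _, _, hp⟩ => hp⟩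
    obtain ⟨b, ⟨hb, hpb⟩, -⟩ := hB p hp
    exact ⟨b, hb, hpb, hp⟩
  have hdisj : (B : Set (Finset α)).PairwiseDisjoint (powersetCard 2) := by
    intro b hb b' hb' hne
    refine disjoint_left.mpr fun p hp hp' => hne ?_
    rw [mem_powersetCard] at hp hp'
    exact hB.eq_of_subset hp.2 hb hb' hp.1 hp'.1
  rw [← card_univ, ← card_powersetCard, hcover, card_biUnion hdisj]
  simp only [card_powersetCard]

theorem sum_card_sub_one (v : α) : ∑ b ∈ B with v ∈ b, (#b - 1) = Fintype.card α - 1 := by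
  have hcover : (univ : Finset α).erase v = {b ∈ B | v ∈ b}.biUnion (·.erase v) := by
    ext w
    simp only [mem_erase, mem_univ, and_true, mem_biUnion, mem_filter]
    refine ⟨fun hw => ?_, fun ⟨_, _, hw, _⟩ => hw⟩
    obtain ⟨b, ⟨hb, hvwb⟩, -⟩ := hB {v, w} (card_pair (Ne.symm hw))
    exact ⟨b, ⟨hb, hvwb (mem_insert_self v _)⟩, hw, hvwb (by simp)⟩
  have hdisj :
      (({b ∈ B | v ∈ b} : Finset _) : Set (Finset α)).PairwiseDisjoint (·.erase v) := by
    intro b hb b' hb' hne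
    rw [mem_coe, mem_filter] at hb hb'
    refine disjoint_left.mpr fun w hw hw' => hne ?_
    rw [mem_erase] at hw hw'
    refine hB.eq_of_subset (card_pair (Ne.symm hw.1)) hb.1 hb'.1 ?_ ?_ <;>
      simp [insert_subset_iff, hb.2, hb'.2, hw.2, hw'.2]
  rw [← card_univ, ← card_erase_of_mem (mem_univ v), hcover, card_biUnion hdisj]
  exact sum_congr rfl fun b hb => (card_erase_of_mem (mem_filter.mp hb).2).symm

end CoversPairsOnce

end Finset

open Classical in
theorem IsOneFactor.card_filter_mem {n : ℕ} {T : Set (Finset (Fin n))} (hT : IsOneFactor n T)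
    (v : Fin n) : #{p | p ∈ T ∧ v ∈ p} = 1 :=
  (Fintype.existsUnique_iff_card_one _).mp (hT.2 v)

open Classical in
theorem IsOneFactor.two_mul_card {n : ℕ} {T : Set (Finset (Fin n))} (hT : IsOneFactor n T) :
    2 * #{p | p ∈ T} = n := by
  have hsum := sum_card (B := {p | p ∈ T}) fun v => by
    simpa [filter_filter] using hT.card_filter_mem v
  rw [sum_congr rfl fun p hp => hT.1 p (mem_filter.mp hp).2, sum_const, smul_eq_mul,
    Fintype.card_fin, mul_one] at hsum
  rw [mul_comm, hsum]

section Design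

open Classical

variable {n r : ℕ} {T : Fin r → Set (Finset (Fin n))} {R : Set (Finset (Fin n))}

noncomputable def factorPairs (T : Fin r → Set (Finset (Fin n))) : Finset (Finset (Fin n)) :=
  univ.biUnion fun i => {p | p ∈ T i}

theorem mem_factorPairs {p : Finset (Fin n)} : p ∈ factorPairs T ↔ ∃ i, p ∈ T i := by
  simp [factorPairs]

namespace IsPairsTriplesDesign

variable (hD : IsPairsTriplesDesign n r T R)
include hD

theorem card_filter_factorPairs (P : Finset (Fin n) → Prop) [DecidablePred P] :
    #{p ∈ factorPairs T | P p} = ∑ i, #{p | p ∈ T i ∧ P p} := by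
  rw [factorPairs, filter_biUnion, card_biUnion]
  · simp only [filter_filter]
  · intro i _ j _ hij
    refine disjoint_left.mpr fun p hpi hpj => ?_
    simp only [mem_filter, mem_univ, true_and] at hpi hpj
    exact Set.disjoint_left.mp (hD.2.1 i j hij) hpi.1 hpj.1

theorem two_mul_card_factorPairs : 2 * #(factorPairs T) = r * n := by
  have h := hD.card_filter_factorPairs fun _ => True
  simp only [filter_true_of_mem fun _ _ => trivial, and_true] at h
  simp [h, mul_sum, (hD.1 _).two_mul_card]

theorem card_filter_mem_factorPairs (v : Fin n) : #{p ∈ factorPairs T | v ∈ p} = r := by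
  simp [hD.card_filter_factorPairs, (hD.1 _).card_filter_mem v]

theorem card_eq_two_of_mem_factorPairs {p : Finset (Fin n)} (hp : p ∈ factorPairs T) :
    #p = 2 := by
  obtain ⟨i, hi⟩ := mem_factorPairs.mp hp
  exact (hD.1 i).1 p hi

theorem disjoint_factorPairs_triples : Disjoint (factorPairs T) R.toFinset := by
  refine disjoint_left.mpr fun b hbF hbR => ?_
  have h2 := hD.card_eq_two_of_mem_factorPairs hbF
  rw [hD.2.2.1 b (Set.mem_toFinset.mp hbR)] at h2
  omega

theorem coversPairsOnce : (factorPairs T ∪ R.toFinset).CoversPairsOnce := by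
  intro p hp
  simp only [mem_union, mem_factorPairs, Set.mem_toFinset]
  rcases hD.2.2.2 p hp with ⟨⟨i, hi, -⟩, hnR⟩ | ⟨hnT, b, ⟨hbR, hpb⟩, hbu⟩
  · refine ⟨p, ⟨.inl ⟨i, hi⟩, subset_rfl⟩, fun q ⟨hq, hpq⟩ => ?_⟩
    rcases hq with ⟨j, hj⟩ | hqR
    · exact (eq_of_subset_of_card_le hpq (by rw [hp, (hD.1 j).1 q hj])).symm
    · exact absurd ⟨q, hqR, hpq⟩ hnR
  · refine ⟨b, ⟨.inr hbR, hpb⟩, fun q ⟨hq, hpq⟩ => ?_⟩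
    rcases hq with ⟨j, hj⟩ | hqR
    · rw [← eq_of_subset_of_card_le hpq (by rw [hp, (hD.1 j).1 q hj])] at hj
      exact absurd hj (hnT j)
    · exact hbu q ⟨hqR, hpq⟩

theorem card_factorPairs_add_three_mul_card :
    #(factorPairs T) + 3 * #R.toFinset = n.choose 2 := by
  have h := hD.coversPairsOnce.sum_card_choose_two
  rw [sum_union hD.disjoint_factorPairs_triples,
    sum_const_nat fun p hp => by rw [hD.card_eq_two_of_mem_factorPairs hp],
    sum_const_nat fun b hb => by rw [hD.2.2.1 b (Set.mem_toFinset.mp hb)]] at h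
  simpa [mul_comm] using h

theorem add_two_mul_card_filter_mem_eq (v : Fin n) :
    r + 2 * #{b ∈ R.toFinset | v ∈ b} = n - 1 := by
  have h := hD.coversPairsOnce.sum_card_sub_one v
  rw [filter_union, sum_union (disjoint_filter_filter hD.disjoint_factorPairs_triples),
    sum_const_nat fun p hp => by rw [hD.card_eq_two_of_mem_factorPairs (mem_filter.mp hp).1],
    sum_const_nat fun b hb => by rw [hD.2.2.1 b (Set.mem_toFinset.mp (mem_filter.mp hb).1)],
    hD.card_filter_mem_factorPairs] at h
  simpa [mul_comm] using h

end IsPairsTriplesDesign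

end Design

theorem stmt16 {n r : ℕ} (hr1 : 1 ≤ r) (hr2 : r < n - 1)
    (h : ∃ (T : Fin r → Set (Finset (Fin n))) (R : Set (Finset (Fin n))),
        IsPairsTriplesDesign n r T R) :
    Even n ∧ Odd r ∧ (n % 6 = 2 ∨ n % 6 = 4 → r % 6 = (n - 1) % 6) := by
  classical
  obtain ⟨T, R, hD⟩ := h
  obtain ⟨m, rfl⟩ : ∃ m, n = 2 * m := ⟨_, (hD.1 ⟨0, hr1⟩).two_mul_card.symm⟩
  have hpairs := hD.two_mul_card_factorPairs
  have hglobal := hD.card_factorPairs_add_three_mul_card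
  obtain ⟨k, hlocal⟩ : ∃ k, r + 2 * k = 2 * m - 1 :=
    ⟨_, hD.add_two_mul_card_filter_mem_eq ⟨0, by omega⟩⟩
  refine ⟨even_two_mul m, Nat.odd_iff.mpr (by omega), fun hmod => ?_⟩
  have hchoose : (2 * m).choose 2 = m * (2 * m - 1) := by
    rw [Nat.choose_two_right, mul_assoc, Nat.mul_div_cancel_left _ two_pos]
  have hdefect : m * (2 * k) = 3 * #R.toFinset := by
    rw [← hlocal] at hchoose
    nlinarith
  have h3 : 3 ∣ 2 * k :=
    ((Nat.prime_three.dvd_mul).mp ⟨_, hdefect⟩).resolve_left (by omega)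
  omega
end

section
/- If n ≥ 6 and n ≡ 0 (mod 6) or n ≡ 2 (mod 6), then there exists an (n,1)-pairs-triples design. -/
-- ZMod 3 helper facts
lemma zmod3_cases : ∀ i j : ZMod 3, j = i ∨ j = i + 1 ∨ i = j + 1 := by decide
lemma zmod3_ne_add_one : ∀ i : ZMod 3, i ≠ i + 1 := by decide
lemma zmod3_ne_add_two : ∀ i : ZMod 3, i ≠ i + 1 + 1 := by decide
lemma zmod3_all : ∀ j : ZMod 3, j = 0 ∨ j = 1 ∨ j = 2 := by decide
lemma zmod3_01 : (0 : ZMod 3) ≠ 1 := by decide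
lemma zmod3_02 : (0 : ZMod 3) ≠ 2 := by decide
lemma zmod3_12 : (1 : ZMod 3) ≠ 2 := by decide

section Core
variable {m : ℕ} (f : ZMod m → ZMod m)

abbrev Pt (m : ℕ) := ZMod m × ZMod 3

def colT (x : ZMod m) : Finset (Pt m) := {(x,0),(x,1),(x,2)}
def mixT (x y : ZMod m) (i : ZMod 3) : Finset (Pt m) := {(x,i),(y,i),(f (x+y), i+1)}
def matP (a : ZMod m) (i : ZMod 3) : Finset (Pt m) := {(a,i),(f (a+a), i+1)}

def Rset : Set (Finset (Pt m)) :=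
  {b | (∃ x, f (x+x) = x ∧ b = colT x) ∨ ∃ x y i, x ≠ y ∧ b = mixT f x y i}
def Mset : Set (Finset (Pt m)) := {p | ∃ a i, f (a+a) ≠ a ∧ p = matP f a i}

lemma mem_colT {v : Pt m} {x : ZMod m} : v ∈ colT x ↔ v.1 = x := by
  obtain ⟨a, j⟩ := v
  simp only [colT, Finset.mem_insert, Finset.mem_singleton, Prod.mk.injEq]
  constructor
  · rintro (⟨h, -⟩ | ⟨h, -⟩ | ⟨h, -⟩) <;> exact h
  · intro h
    rcases zmod3_all j with hj | hj | hj <;> subst hj <;> simp [h]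

lemma mem_mixT {v : Pt m} {x y : ZMod m} {i : ZMod 3} :
    v ∈ mixT f x y i ↔ v = (x,i) ∨ v = (y,i) ∨ v = (f (x+y), i+1) := by
  simp [mixT]

lemma mem_matP {v : Pt m} {a : ZMod m} {i : ZMod 3} :
    v ∈ matP f a i ↔ v = (a,i) ∨ v = (f (a+a), i+1) := by
  simp [matP]

lemma mixT_comm (x y : ZMod m) (i : ZMod 3) : mixT f x y i = mixT f y x i := by
  unfold mixT
  rw [add_comm y x]
  ext v
  simp only [Finset.mem_insert, Finset.mem_singleton]
  tauto

lemma card_colT (x : ZMod m) : (colT x).card = 3 := by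
  refine Finset.card_eq_three.mpr ⟨(x,0), (x,1), (x,2), ?_, ?_, ?_, rfl⟩
  · exact fun h => zmod3_01 (congrArg Prod.snd h)
  · exact fun h => zmod3_02 (congrArg Prod.snd h)
  · exact fun h => zmod3_12 (congrArg Prod.snd h)

lemma card_mixT {x y : ZMod m} (i : ZMod 3) (hxy : x ≠ y) : (mixT f x y i).card = 3 := by
  refine Finset.card_eq_three.mpr ⟨(x,i), (y,i), (f (x+y), i+1), ?_, ?_, ?_, rfl⟩
  · exact fun h => hxy (congrArg Prod.fst h)
  · exact fun h => zmod3_ne_add_one i (congrArg Prod.snd h)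
  · exact fun h => zmod3_ne_add_one i (congrArg Prod.snd h)

lemma card_matP {a : ZMod m} (i : ZMod 3) : (matP f a i).card = 2 := by
  refine Finset.card_pair ?_
  exact fun h => zmod3_ne_add_one i (congrArg Prod.snd h)

end Core

section Cover
variable {m : ℕ} (f g : ZMod m → ZMod m)

lemma pair_subset {α : Type*} [DecidableEq α] {u v : α} {b : Finset α} :
    ({u, v} : Finset α) ⊆ b ↔ u ∈ b ∧ v ∈ b := by
  simp [Finset.insert_subset_iff]

lemma same_level (x y : ZMod m) (i : ZMod 3) (hxy : x ≠ y) :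
    ({(x,i),(y,i)} : Finset (Pt m)) ∉ Mset f ∧
      ∃! b, b ∈ Rset f ∧ ({(x,i),(y,i)} : Finset (Pt m)) ⊆ b := by
  constructor
  · rintro ⟨a, k, hne, hp⟩
    have hx : ((x,i) : Pt m) ∈ matP f a k := by rw [← hp]; simp
    have hy : ((y,i) : Pt m) ∈ matP f a k := by rw [← hp]; simp
    rw [mem_matP] at hx hy
    rcases hx with hx | hx <;> rcases hy with hy | hy <;>
      simp only [Prod.mk.injEq] at hx hy
    · exact hxy (hx.1.trans hy.1.symm)
    · exact zmod3_ne_add_one k (hx.2.symm.trans hy.2)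
    · exact zmod3_ne_add_one k (hy.2.symm.trans hx.2)
    · exact hxy (hx.1.trans hy.1.symm)
  · refine ⟨mixT f x y i, ⟨Or.inr ⟨x, y, i, hxy, rfl⟩, ?_⟩, ?_⟩
    · rw [pair_subset, mem_mixT, mem_mixT]; tauto
    · rintro b ⟨hb, hsub⟩
      rw [pair_subset] at hsub
      obtain ⟨hxb, hyb⟩ := hsub
      rcases hb with ⟨z, hz, rfl⟩ | ⟨x', y', i', hxy', rfl⟩
      · rw [mem_colT] at hxb hyb
        exact absurd (hxb.trans hyb.symm) hxy
      · rw [mem_mixT] at hxb hyb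
        rcases hxb with h1 | h1 | h1 <;> rcases hyb with h2 | h2 | h2 <;>
          simp only [Prod.mk.injEq] at h1 h2
        · exact absurd (h1.1.trans h2.1.symm) hxy
        · obtain ⟨rfl, rfl⟩ := h1; obtain ⟨rfl, -⟩ := h2; rfl
        · exact absurd (h1.2.symm.trans h2.2) (zmod3_ne_add_one i')
        · obtain ⟨rfl, rfl⟩ := h1; obtain ⟨rfl, -⟩ := h2
          exact (mixT_comm f y x i).symm ▸ rfl
        · exact absurd (h1.1.trans h2.1.symm) hxy
        · exact absurd (h1.2.symm.trans h2.2) (zmod3_ne_add_one i')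
        · exact absurd (h2.2.symm.trans h1.2) (zmod3_ne_add_one i')
        · exact absurd (h2.2.symm.trans h1.2) (zmod3_ne_add_one i')
        · exact absurd (h1.1.trans h2.1.symm) hxy

end Cover

lemma z3A : ∀ i k : ZMod 3, i = k → i + 1 = k → False := by decide
lemma z3B : ∀ i k : ZMod 3, i = k + 1 → i + 1 = k → False := by decide
lemma z3C : ∀ i k : ZMod 3, i = k + 1 → i + 1 = k + 1 → False := by decide

section Cross
variable {m : ℕ} {f g : ZMod m → ZMod m}

lemma f_inj (hgf : ∀ s, g (f s) = s) : Function.Injective f :=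
  fun a b h => by rw [← hgf a, ← hgf b, h]

lemma cross_A (hgf : ∀ s, g (f s) = s) (x : ZMod m) (i : ZMod 3) (hx : f (x + x) = x) :
    ({(x,i),(x,i+1)} : Finset (Pt m)) ∉ Mset f ∧
      ∃! b, b ∈ Rset f ∧ ({(x,i),(x,i+1)} : Finset (Pt m)) ⊆ b := by
  constructor
  · rintro ⟨a, k, hne, hp⟩
    have h1 : ((x,i) : Pt m) ∈ matP f a k := by rw [← hp]; simp
    have h2 : ((x,i+1) : Pt m) ∈ matP f a k := by rw [← hp]; simp
    rw [mem_matP] at h1 h2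
    rcases h1 with h1 | h1 <;> rcases h2 with h2 | h2 <;>
      simp only [Prod.mk.injEq] at h1 h2
    · exact z3A i k h1.2 h2.2
    · exact hne (h2.1.symm.trans h1.1)
    · exact z3B i k h1.2 h2.2
    · exact z3C i k h1.2 h2.2
  · refine ⟨colT x, ⟨Or.inl ⟨x, hx, rfl⟩, ?_⟩, ?_⟩
    · rw [pair_subset, mem_colT, mem_colT]; exact ⟨rfl, rfl⟩
    · rintro b ⟨hb, hsub⟩
      rw [pair_subset] at hsub
      obtain ⟨h1b, h2b⟩ := hsub
      rcases hb with ⟨z, hz, rfl⟩ | ⟨x', y', i', hxy', rfl⟩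
      · rw [mem_colT] at h1b
        exact congrArg colT h1b.symm
      · exfalso
        rw [mem_mixT] at h1b h2b
        rcases h1b with h1 | h1 | h1 <;> rcases h2b with h2 | h2 | h2 <;>
          simp only [Prod.mk.injEq] at h1 h2
        · exact z3A i i' h1.2 h2.2
        · exact z3A i i' h1.2 h2.2
        · obtain ⟨rfl, rfl⟩ := h1
          have h3 : x + y' = x + x := f_inj hgf (h2.1.symm.trans hx.symm)
          exact hxy' (add_left_cancel h3).symm
        · exact z3A i i' h1.2 h2.2
        · exact z3A i i' h1.2 h2.2
        · obtain ⟨rfl, rfl⟩ := h1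
          have h3 : x' + x = x + x := f_inj hgf (h2.1.symm.trans hx.symm)
          exact hxy' (add_right_cancel h3)
        · exact z3B i i' h1.2 h2.2
        · exact z3B i i' h1.2 h2.2
        · exact z3C i i' h1.2 h2.2

lemma cross_B (hgf : ∀ s, g (f s) = s) (x : ZMod m) (i : ZMod 3) (hx : f (x + x) ≠ x) :
    ({(x,i),(f (x+x),i+1)} : Finset (Pt m)) ∈ Mset f ∧
      ¬∃ b ∈ Rset f, ({(x,i),(f (x+x),i+1)} : Finset (Pt m)) ⊆ b := by
  refine ⟨⟨x, i, hx, rfl⟩, ?_⟩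
  rintro ⟨b, hb, hsub⟩
  rw [pair_subset] at hsub
  obtain ⟨h1b, h2b⟩ := hsub
  rcases hb with ⟨z, hz, rfl⟩ | ⟨x', y', i', hxy', rfl⟩
  · rw [mem_colT] at h1b h2b
    exact hx (h2b.trans h1b.symm)
  · rw [mem_mixT] at h1b h2b
    rcases h1b with h1 | h1 | h1 <;> rcases h2b with h2 | h2 | h2 <;>
      simp only [Prod.mk.injEq] at h1 h2
    · exact z3A i i' h1.2 h2.2
    · exact z3A i i' h1.2 h2.2
    · obtain ⟨rfl, rfl⟩ := h1
      have h3 : x + x = x + y' := f_inj hgf h2.1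
      exact hxy' (add_left_cancel h3.symm).symm
    · exact z3A i i' h1.2 h2.2
    · exact z3A i i' h1.2 h2.2
    · obtain ⟨rfl, rfl⟩ := h1
      have h3 : x + x = x' + x := f_inj hgf h2.1
      exact hxy' (add_right_cancel h3.symm)
    · exact z3B i i' h1.2 h2.2
    · exact z3B i i' h1.2 h2.2
    · exact hx (h2.1.trans h1.1.symm)

end Cross

section Cross2
variable {m : ℕ} {f g : ZMod m → ZMod m}

lemma cross_C (hgf : ∀ s, g (f s) = s) (hfg : ∀ c, f (g c) = c)
    (x c : ZMod m) (i : ZMod 3) (hc : c ≠ f (x + x)) :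
    ({(x,i),(c,i+1)} : Finset (Pt m)) ∉ Mset f ∧
      ∃! b, b ∈ Rset f ∧ ({(x,i),(c,i+1)} : Finset (Pt m)) ⊆ b := by
  have hy0 : f (x + (g c - x)) = c := by
    rw [show x + (g c - x) = g c by ring]; exact hfg c
  have hy0x : g c - x ≠ x := by
    intro h
    apply hc
    rw [← hfg c, show g c = x + x by linear_combination h]
  constructor
  · rintro ⟨a, k, hne, hp⟩
    have h1 : ((x,i) : Pt m) ∈ matP f a k := by rw [← hp]; simp
    have h2 : ((c,i+1) : Pt m) ∈ matP f a k := by rw [← hp]; simp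
    rw [mem_matP] at h1 h2
    rcases h1 with h1 | h1 <;> rcases h2 with h2 | h2 <;>
      simp only [Prod.mk.injEq] at h1 h2
    · exact z3A i k h1.2 h2.2
    · exact hc (by rw [h2.1, ← h1.1])
    · exact z3B i k h1.2 h2.2
    · exact z3C i k h1.2 h2.2
  · refine ⟨mixT f x (g c - x) i, ⟨Or.inr ⟨x, g c - x, i, fun h => hy0x h.symm, rfl⟩, ?_⟩, ?_⟩
    · rw [pair_subset, mem_mixT, mem_mixT]
      exact ⟨Or.inl rfl, Or.inr (Or.inr (by rw [hy0]))⟩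
    · rintro b ⟨hb, hsub⟩
      rw [pair_subset] at hsub
      obtain ⟨h1b, h2b⟩ := hsub
      rcases hb with ⟨z, hz, rfl⟩ | ⟨x', y', i', hxy', rfl⟩
      · exfalso
        rw [mem_colT] at h1b h2b
        have hx1 : x = z := h1b
        have hc1 : c = z := h2b
        exact hc (by rw [hc1, hx1]; exact hz.symm)
      · rw [mem_mixT] at h1b h2b
        rcases h1b with h1 | h1 | h1 <;> rcases h2b with h2 | h2 | h2 <;>
          simp only [Prod.mk.injEq] at h1 h2
        · exact absurd h2.2 (fun h => z3A i i' h1.2 h)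
        · exact absurd h2.2 (fun h => z3A i i' h1.2 h)
        · -- x = x', i = i', c = f (x' + y')
          obtain ⟨rfl, rfl⟩ := h1
          have h3 : x + y' = x + (g c - x) := f_inj hgf (by rw [h2.1.symm, hy0])
          rw [add_left_cancel h3]
        · exact absurd h2.2 (fun h => z3A i i' h1.2 h)
        · exact absurd h2.2 (fun h => z3A i i' h1.2 h)
        · -- x = y', i = i', c = f (x' + y')
          obtain ⟨rfl, rfl⟩ := h1
          have h3 : x' + x = x + (g c - x) := f_inj hgf (by rw [h2.1.symm, hy0])
          have h4 : x' = g c - x := by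
            have : x + x' = x + (g c - x) := by rw [← h3]; ring
            exact add_left_cancel this
          rw [h4]
          exact mixT_comm f (g c - x) x i
        · exact absurd h2.2 (fun h => z3B i i' h1.2 h)
        · exact absurd h2.2 (fun h => z3B i i' h1.2 h)
        · exact absurd h2.2 (fun h => z3C i i' h1.2 h)

lemma cross_all (hgf : ∀ s, g (f s) = s) (hfg : ∀ c, f (g c) = c)
    (x c : ZMod m) (i : ZMod 3) :
    (({(x,i),(c,i+1)} : Finset (Pt m)) ∈ Mset f ∧
        ¬∃ b ∈ Rset f, ({(x,i),(c,i+1)} : Finset (Pt m)) ⊆ b) ∨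
      (({(x,i),(c,i+1)} : Finset (Pt m)) ∉ Mset f ∧
        ∃! b, b ∈ Rset f ∧ ({(x,i),(c,i+1)} : Finset (Pt m)) ⊆ b) := by
  by_cases h1 : c = f (x + x)
  · subst h1
    by_cases h2 : f (x + x) = x
    · rw [h2]
      exact Or.inr (cross_A hgf x i h2)
    · exact Or.inl (cross_B hgf x i h2)
  · exact Or.inr (cross_C hgf hfg x c i h1)

end Cross2

section CoreMain
variable {m : ℕ} {f g : ZMod m → ZMod m}

theorem core_cover (hgf : ∀ s, g (f s) = s) (hfg : ∀ c, f (g c) = c)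
    (p : Finset (Pt m)) (hp : p.card = 2) :
    (p ∈ Mset f ∧ ¬∃ b ∈ Rset f, p ⊆ b) ∨
      (p ∉ Mset f ∧ ∃! b, b ∈ Rset f ∧ p ⊆ b) := by
  obtain ⟨u, v, huv, rfl⟩ := Finset.card_eq_two.mp hp
  obtain ⟨a, i⟩ := u
  obtain ⟨b, j⟩ := v
  rcases zmod3_cases i j with rfl | rfl | hij
  · have hab : a ≠ b := fun h => huv (by rw [h])
    exact Or.inr (same_level f a b _ hab)
  · exact cross_all hgf hfg a b _
  · rw [Finset.pair_comm]
    rw [hij]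
    exact cross_all hgf hfg b a j

theorem core_card3 {b : Finset (Pt m)} (hb : b ∈ Rset f) : b.card = 3 := by
  rcases hb with ⟨z, _, rfl⟩ | ⟨x, y, i, hxy, rfl⟩
  · exact card_colT z
  · exact card_mixT f i hxy

theorem core_card2 {p : Finset (Pt m)} (hp : p ∈ Mset f) : p.card = 2 := by
  obtain ⟨a, i, _, rfl⟩ := hp
  exact card_matP f i

theorem core_match (huniq : ∀ v : ZMod m, ∃! a, f (a + a) ≠ a ∧ (v = a ∨ v = f (a + a)))
    (w : Pt m) : ∃! p, p ∈ Mset f ∧ w ∈ p := by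
  obtain ⟨v, j⟩ := w
  obtain ⟨a, ⟨hane, hva⟩, hauniq⟩ := huniq v
  rcases hva with rfl | hv
  · refine ⟨matP f v j, ⟨⟨v, j, hane, rfl⟩, by simp [matP]⟩, ?_⟩
    rintro p' ⟨⟨a', k, hane', rfl⟩, hw⟩
    rw [mem_matP] at hw
    rcases hw with hw | hw <;> simp only [Prod.mk.injEq] at hw
    · rw [hw.1, hw.2]
    · exfalso
      have ha' : a' = v := hauniq a' ⟨hane', Or.inr hw.1⟩
      rw [ha'] at hw
      exact hane hw.1.symm
  · subst hv
    refine ⟨matP f a (j - 1), ⟨⟨a, j - 1, hane, rfl⟩, ?_⟩, ?_⟩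
    · rw [mem_matP]
      exact Or.inr (by rw [sub_add_cancel])
    · rintro p' ⟨⟨a', k, hane', rfl⟩, hw⟩
      rw [mem_matP] at hw
      rcases hw with hw | hw <;> simp only [Prod.mk.injEq] at hw
      · exfalso
        have ha' : a' = a := hauniq a' ⟨hane', Or.inl hw.1⟩
        rw [ha'] at hw
        exact hane hw.1
      · have ha' : a' = a := hauniq a' ⟨hane', Or.inr hw.1⟩
        have hk : k = j - 1 := by rw [hw.2]; ring
        rw [ha', hk]

end CoreMain

section Inst6
variable {t : ℕ} (ht : 1 ≤ t)

noncomputable def f6 (t : ℕ) (s : ZMod (2*t)) : ZMod (2*t) :=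
  ((s.val / 2 + (s.val % 2) * t : ℕ) : ZMod (2*t))

noncomputable def g6 (t : ℕ) (c : ZMod (2*t)) : ZMod (2*t) :=
  if c.val < t then ((2 * c.val : ℕ) : ZMod (2*t)) else ((2 * (c.val - t) + 1 : ℕ) : ZMod (2*t))

variable [NeZero (2*t)]

lemma valcast (s : ZMod (2*t)) : ((s.val : ℕ) : ZMod (2*t)) = s :=
  (ZMod.natCast_val s).trans (ZMod.cast_id _ s)

lemma valc {k : ℕ} (hk : k < 2*t) : ((k : ZMod (2*t))).val = k := ZMod.val_cast_of_lt hk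

include ht

lemma hgf6 : ∀ s : ZMod (2*t), g6 t (f6 t s) = s := by
  intro s
  have hs : s.val < 2*t := ZMod.val_lt s
  rcases Nat.even_or_odd s.val with he | ho
  · have he' : s.val % 2 = 0 := Nat.even_iff.mp he
    have h1 : (f6 t s).val = s.val / 2 := by
      rw [f6, he']
      simpa using valc (by omega : s.val / 2 + 0 * t < 2*t)
    rw [g6, h1, if_pos (by omega : s.val / 2 < t)]
    rw [show 2 * (s.val / 2) = s.val by omega]
    exact valcast s
  · have ho' : s.val % 2 = 1 := Nat.odd_iff.mp ho
    have h1 : (f6 t s).val = s.val / 2 + t := by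
      rw [f6, ho']
      simpa using valc (by omega : s.val / 2 + 1 * t < 2*t)
    rw [g6, h1, if_neg (by omega : ¬(s.val / 2 + t < t))]
    rw [show 2 * (s.val / 2 + t - t) + 1 = s.val by omega]
    exact valcast s

lemma hfg6 : ∀ c : ZMod (2*t), f6 t (g6 t c) = c := by
  intro c
  have hc : c.val < 2*t := ZMod.val_lt c
  rw [g6]
  by_cases h : c.val < t
  · rw [if_pos h, f6, valc (by omega : 2 * c.val < 2*t)]
    rw [Nat.mul_mod_right, show 2 * c.val / 2 + 0 * t = c.val by omega]
    exact valcast c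
  · rw [if_neg h, f6, valc (by omega : 2 * (c.val - t) + 1 < 2*t)]
    rw [Nat.mul_add_mod, show (2 * (c.val - t) + 1) / 2 + (1 % 2) * t = c.val by omega]
    exact valcast c

lemma d6_lt {a : ZMod (2*t)} (ha : a.val < t) : f6 t (a + a) = a := by
  have h1 : (a + a).val = 2 * a.val := by
    rw [ZMod.val_add, Nat.mod_eq_of_lt (by omega)]
    omega
  rw [f6, h1, Nat.mul_mod_right, show 2 * a.val / 2 + 0 * t = a.val by omega]
  exact valcast a

lemma d6_ge {a : ZMod (2*t)} (ha : t ≤ a.val) : f6 t (a + a) = a - (t : ZMod (2*t)) := by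
  have hav : a.val < 2*t := ZMod.val_lt a
  have h1 : (a + a).val = 2 * (a.val - t) := by
    rw [ZMod.val_add, show a.val + a.val = 2 * (a.val - t) + 1 * (2 * t) by omega,
      Nat.add_mul_mod_self_right, Nat.mod_eq_of_lt (by omega)]
  rw [f6, h1, Nat.mul_mod_right, show 2 * (a.val - t) / 2 + 0 * t = a.val - t by omega]
  rw [Nat.cast_sub ha, valcast]

lemma tcast_ne_zero : ((t : ℕ) : ZMod (2*t)) ≠ 0 := by
  intro h
  have h2 := valc (t := t) (by omega : t < 2*t)
  rw [h, ZMod.val_zero] at h2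
  omega

lemma d6_val_sub {a : ZMod (2*t)} (ha : t ≤ a.val) :
    (a - (t : ZMod (2*t))).val = a.val - t := by
  have hav : a.val < 2*t := ZMod.val_lt a
  have h2 : a - (t : ZMod (2*t)) = ((a.val - t : ℕ) : ZMod (2*t)) := by
    rw [Nat.cast_sub ha, valcast]
  rw [h2, valc (by omega : a.val - t < 2*t)]

lemma d6_ne {a : ZMod (2*t)} (ha : t ≤ a.val) : f6 t (a + a) ≠ a := by
  rw [d6_ge ht ha]
  intro h
  exact tcast_ne_zero ht (sub_eq_self.mp h)

lemma huniq6 : ∀ v : ZMod (2*t), ∃! a, f6 t (a + a) ≠ a ∧ (v = a ∨ v = f6 t (a + a)) := by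
  intro v
  have hv2 : v.val < 2*t := ZMod.val_lt v
  by_cases hv : t ≤ v.val
  · refine ⟨v, ⟨d6_ne ht hv, Or.inl rfl⟩, ?_⟩
    rintro a' ⟨hne', hv'⟩
    have ha' : t ≤ a'.val := by
      by_contra h
      exact hne' (d6_lt ht (by omega))
    rcases hv' with h | h
    · exact h.symm
    · exfalso
      rw [d6_ge ht ha'] at h
      have h3 := d6_val_sub ht ha'
      have h4 : a'.val < 2*t := ZMod.val_lt a'
      rw [← h] at h3
      omega
  · push_neg at hv
    have hvt : (v + (t : ZMod (2*t))).val = v.val + t := by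
      rw [ZMod.val_add, valc (by omega : t < 2*t), Nat.mod_eq_of_lt (by omega)]
    refine ⟨v + (t : ZMod (2*t)), ⟨d6_ne ht (by omega), Or.inr ?_⟩, ?_⟩
    · rw [d6_ge ht (by omega), add_sub_cancel_right]
    · rintro a' ⟨hne', hv'⟩
      have ha' : t ≤ a'.val := by
        by_contra h
        exact hne' (d6_lt ht (by omega))
      rcases hv' with h | h
      · exfalso
        rw [h] at hv
        omega
      · rw [d6_ge ht ha'] at h
        rw [h]
        ring

end Inst6

section InstBose
variable {m : ℕ} [NeZero m] (hm : m % 2 = 1)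

noncomputable def fB (m : ℕ) (s : ZMod m) : ZMod m := (((m+1)/2 : ℕ) : ZMod m) * s
noncomputable def gB (m : ℕ) (c : ZMod m) : ZMod m := c + c

include hm

lemma keyB : (2 : ZMod m) * (((m+1)/2 : ℕ) : ZMod m) = 1 := by
  have h1 : ((2 * ((m+1)/2) : ℕ) : ZMod m) = ((m + 1 : ℕ) : ZMod m) := by
    congr 1
    omega
  push_cast at h1
  rw [ZMod.natCast_self] at h1
  simpa using h1

lemma hgfB : ∀ s : ZMod m, gB m (fB m s) = s := by
  intro s
  have : gB m (fB m s) = (2 : ZMod m) * (((m+1)/2 : ℕ) : ZMod m) * s := by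
    rw [gB, fB]; ring
  rw [this, keyB hm, one_mul]

lemma hfgB : ∀ c : ZMod m, fB m (gB m c) = c := by
  intro c
  have : fB m (gB m c) = (2 : ZMod m) * (((m+1)/2 : ℕ) : ZMod m) * c := by
    rw [gB, fB]; ring
  rw [this, keyB hm, one_mul]

lemma diagB : ∀ a : ZMod m, fB m (a + a) = a := by
  intro a
  have : fB m (a + a) = (2 : ZMod m) * (((m+1)/2 : ℕ) : ZMod m) * a := by
    rw [fB]; ring
  rw [this, keyB hm, one_mul]

lemma MsetB_empty : ∀ p : Finset (Pt m), p ∉ Mset (fB m) := by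
  rintro p ⟨a, i, hne, rfl⟩
  exact hne (diagB hm a)

/-- The Bose construction is a Steiner triple system. -/
lemma boseSTS (p : Finset (Pt m)) (hp : p.card = 2) :
    ∃! b, b ∈ Rset (fB m) ∧ p ⊆ b := by
  rcases core_cover (hgfB hm) (hfgB hm) p hp with ⟨hmem, -⟩ | ⟨-, h⟩
  · exact absurd hmem (MsetB_empty hm p)
  · exact h

end InstBose

section Delete
variable {γ : Type} [DecidableEq γ] (S : Set (Finset γ)) (v₀ : γ)

def Mdel : Set (Finset {x : γ // x ≠ v₀}) :=
  {p | p.card = 2 ∧ insert v₀ (p.map (Function.Embedding.subtype _)) ∈ S}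
def Rdel : Set (Finset {x : γ // x ≠ v₀}) :=
  {b | b.map (Function.Embedding.subtype _) ∈ S}

lemma v0_notMem_map (p : Finset {x : γ // x ≠ v₀}) :
    v₀ ∉ p.map (Function.Embedding.subtype _) := by
  rw [Finset.mem_map]
  rintro ⟨x, hx, hxe⟩
  exact x.2 hxe

lemma hMdel2 : ∀ p ∈ Mdel S v₀, p.card = 2 := fun _ hp => hp.1

variable (hS3 : ∀ b ∈ S, b.card = 3)
  (hScov : ∀ p : Finset γ, p.card = 2 → ∃! b, b ∈ S ∧ p ⊆ b)

include hS3

lemma hRdel3 : ∀ b ∈ Rdel S v₀, b.card = 3 := by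
  intro b hb
  have := hS3 _ hb
  rwa [Finset.card_map] at this

include hScov

lemma hMdelcov : ∀ v : {x : γ // x ≠ v₀}, ∃! p, p ∈ Mdel S v₀ ∧ v ∈ p := by
  intro v
  have hq2 : ({v₀, (v : γ)} : Finset γ).card = 2 := Finset.card_pair (Ne.symm v.2)
  obtain ⟨b, ⟨hbS, hqb⟩, hbu⟩ := hScov _ hq2
  have hv₀b : v₀ ∈ b := hqb (by simp)
  have hvb : (v : γ) ∈ b := hqb (by simp)
  set p : Finset {x : γ // x ≠ v₀} := (b.erase v₀).subtype (· ≠ v₀) with hp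
  have hpmap : p.map (Function.Embedding.subtype _) = b.erase v₀ := by
    rw [hp, Finset.subtype_map]
    exact Finset.filter_true_of_mem (fun x hx => (Finset.mem_erase.mp hx).1)
  have hins : insert v₀ (p.map (Function.Embedding.subtype _)) = b := by
    rw [hpmap, Finset.insert_erase hv₀b]
  have hpcard : p.card = 2 := by
    have h1 : (p.map (Function.Embedding.subtype _)).card = p.card := Finset.card_map _
    rw [hpmap, Finset.card_erase_of_mem hv₀b, hS3 _ hbS] at h1
    omega
  refine ⟨p, ⟨⟨hpcard, by rw [hins]; exact hbS⟩, ?_⟩, ?_⟩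
  · rw [hp, Finset.mem_subtype]
    exact Finset.mem_erase.mpr ⟨v.2, hvb⟩
  · rintro p' ⟨⟨hp'2, hp'S⟩, hvp'⟩
    have hqsub : ({v₀, (v : γ)} : Finset γ) ⊆ insert v₀ (p'.map (Function.Embedding.subtype _)) := by
      rw [pair_subset]
      exact ⟨Finset.mem_insert_self _ _,
        Finset.mem_insert_of_mem (Finset.mem_map_of_mem _ hvp')⟩
    have hb' : insert v₀ (p'.map (Function.Embedding.subtype _)) = b := hbu _ ⟨hp'S, hqsub⟩
    apply Finset.map_injective (Function.Embedding.subtype _)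
    rw [hpmap, ← hb', Finset.erase_insert (v0_notMem_map v₀ p')]

lemma hdelcov : ∀ p : Finset {x : γ // x ≠ v₀}, p.card = 2 →
    (p ∈ Mdel S v₀ ∧ ¬∃ b ∈ Rdel S v₀, p ⊆ b) ∨
      (p ∉ Mdel S v₀ ∧ ∃! b, b ∈ Rdel S v₀ ∧ p ⊆ b) := by
  intro p hp2
  set P := p.map (Function.Embedding.subtype (· ≠ v₀)) with hP
  have hP2 : P.card = 2 := by rw [hP, Finset.card_map]; exact hp2
  obtain ⟨b, ⟨hbS, hPb⟩, hbu⟩ := hScov P hP2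
  by_cases hv0 : v₀ ∈ b
  · left
    have hbeq : insert v₀ P = b := by
      apply Finset.eq_of_subset_of_card_le (Finset.insert_subset hv0 hPb)
      rw [Finset.card_insert_of_notMem (v0_notMem_map v₀ p), hS3 _ hbS, hP2]
    constructor
    · exact ⟨hp2, by rw [← hP, hbeq]; exact hbS⟩
    · rintro ⟨b', hb', hpb'⟩
      have hb'S : b'.map (Function.Embedding.subtype _) ∈ S := hb'
      have hsub : P ⊆ b'.map (Function.Embedding.subtype _) := Finset.map_subset_map.mpr hpb'
      have := hbu _ ⟨hb'S, hsub⟩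
      rw [← this] at hv0
      exact v0_notMem_map v₀ b' hv0
  · right
    constructor
    · rintro ⟨-, hins⟩
      have hsub : P ⊆ insert v₀ P := Finset.subset_insert _ _
      have := hbu _ ⟨hins, hsub⟩
      rw [← this] at hv0
      exact hv0 (Finset.mem_insert_self _ _)
    · set B : Finset {x : γ // x ≠ v₀} := b.subtype (· ≠ v₀) with hB
      have hBmap : B.map (Function.Embedding.subtype _) = b := by
        rw [hB, Finset.subtype_map]
        exact Finset.filter_true_of_mem (fun x hx h => hv0 (h ▸ hx))
      refine ⟨B, ⟨by rw [Rdel, Set.mem_setOf_eq, hBmap]; exact hbS, ?_⟩, ?_⟩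
      · rw [← Finset.map_subset_map (f := Function.Embedding.subtype (· ≠ v₀)), hBmap]
        exact hPb
      · rintro B' ⟨hB', hpB'⟩
        have : B'.map (Function.Embedding.subtype _) = b :=
          hbu _ ⟨hB', Finset.map_subset_map.mpr hpB'⟩
        apply Finset.map_injective (Function.Embedding.subtype (· ≠ v₀))
        rw [this, hBmap]

end Delete


section Transfer
variable {n : ℕ} {α : Type} [DecidableEq α]

theorem build_design (e : α ≃ Fin n) (M R : Set (Finset α))
    (hM2 : ∀ p ∈ M, p.card = 2)
    (hMcov : ∀ v : α, ∃! p, p ∈ M ∧ v ∈ p)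
    (hR3 : ∀ b ∈ R, b.card = 3)
    (hcov : ∀ p : Finset α, p.card = 2 →
      (p ∈ M ∧ ¬∃ b ∈ R, p ⊆ b) ∨ (p ∉ M ∧ ∃! b, b ∈ R ∧ p ⊆ b)) :
    ∃ (T : Fin 1 → Set (Finset (Fin n))) (R' : Set (Finset (Fin n))),
      IsPairsTriplesDesign n 1 T R' := by
  classical
  set F : Finset α → Finset (Fin n) := fun s => s.map e.toEmbedding with hF
  have memF : ∀ (v : Fin n) (s : Finset α), v ∈ F s ↔ e.symm v ∈ s := by
    intro v s
    exact Finset.mem_map_equiv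
  have subF : ∀ s u : Finset α, F s ⊆ F u ↔ s ⊆ u := by
    intro s u
    exact Finset.map_subset_map
  have Finj : Function.Injective F := fun s u h => Finset.map_injective _ h
  have cardF : ∀ s : Finset α, (F s).card = s.card := fun s => Finset.card_map _
  have FFinv : ∀ q : Finset (Fin n), F (q.map e.symm.toEmbedding) = q := by
    intro q
    ext x
    rw [memF]
    rw [Finset.mem_map_equiv]
    rw [Equiv.symm_symm, Equiv.apply_symm_apply]
  refine ⟨fun _ => F '' M, F '' R, ?_, ?_, ?_, ?_⟩
  · intro _
    constructor
    · rintro q ⟨p, hp, rfl⟩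
      rw [cardF]
      exact hM2 p hp
    · intro v
      obtain ⟨p, ⟨hpM, hvp⟩, hup⟩ := hMcov (e.symm v)
      refine ⟨F p, ⟨⟨p, hpM, rfl⟩, (memF v p).mpr hvp⟩, ?_⟩
      rintro q ⟨⟨p', hp', rfl⟩, hvq⟩
      rw [hup p' ⟨hp', (memF v p').mp hvq⟩]
  · intro i j hij
    exact absurd (Subsingleton.elim i j) hij
  · rintro b ⟨b₀, hb₀, rfl⟩
    rw [cardF]
    exact hR3 b₀ hb₀
  · intro q hq
    set p := q.map e.symm.toEmbedding with hp
    have hFp : F p = q := FFinv q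
    have hp2 : p.card = 2 := by
      have := cardF p
      rw [hFp] at this
      omega
    rcases hcov p hp2 with ⟨hpM, hnb⟩ | ⟨hpM, ⟨b₀, ⟨hb₀, hpb₀⟩, hbu⟩⟩
    · refine Or.inl ⟨⟨0, ⟨p, hpM, hFp⟩, fun i _ => Subsingleton.elim i 0⟩, ?_⟩
      rintro ⟨b, ⟨b₀, hb₀, rfl⟩, hqb⟩
      rw [← hFp] at hqb
      exact hnb ⟨b₀, hb₀, (subF p b₀).mp hqb⟩
    · refine Or.inr ⟨?_, ⟨F b₀, ⟨⟨b₀, hb₀, rfl⟩, ?_⟩, ?_⟩⟩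
      · rintro i ⟨p', hp', hFp'⟩
        exact hpM (Finj (hFp'.trans hFp.symm) ▸ hp')
      · rw [← hFp]
        exact (subF p b₀).mpr hpb₀
      · rintro b ⟨⟨b₁, hb₁, rfl⟩, hqb⟩
        rw [← hFp] at hqb
        rw [hbu b₁ ⟨hb₁, (subF p b₁).mp hqb⟩]

end Transfer


theorem stmt17 {n : ℕ} (hn : 6 ≤ n) (hmod : n % 6 = 0 ∨ n % 6 = 2) :
    ∃ (T : Fin 1 → Set (Finset (Fin n))) (R : Set (Finset (Fin n))),
      IsPairsTriplesDesign n 1 T R := by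
  rcases hmod with hmod | hmod
  · -- n ≡ 0 (mod 6)
    set t := n / 6 with hts
    have ht : 1 ≤ t := by omega
    haveI : NeZero (2 * t) := ⟨by omega⟩
    have hcard : Fintype.card (Pt (2 * t)) = n := by
      rw [Fintype.card_prod, ZMod.card, ZMod.card]
      omega
    exact build_design (Fintype.equivFinOfCardEq hcard) (Mset (f6 t)) (Rset (f6 t))
      (fun p hp => core_card2 hp) (core_match (huniq6 ht)) (fun b hb => core_card3 hb)
      (core_cover (hgf6 ht) (hfg6 ht))
  · -- n ≡ 2 (mod 6)
    set m := (n + 1) / 3 with hms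
    have hm : 3 * m = n + 1 := by omega
    have hmo : m % 2 = 1 := by omega
    haveI : NeZero m := ⟨by omega⟩
    set v₀ : Pt m := ((0 : ZMod m), (0 : ZMod 3)) with hv₀
    set S := Rset (fB m) with hS
    have hS3 : ∀ b ∈ S, b.card = 3 := fun b hb => core_card3 hb
    have hScov : ∀ p : Finset (Pt m), p.card = 2 → ∃! b, b ∈ S ∧ p ⊆ b := boseSTS hmo
    have hcard : Fintype.card {x : Pt m // x ≠ v₀} = n := by
      have h := Fintype.card_subtype_compl (fun x : Pt m => x = v₀)
      rw [Fintype.card_subtype_eq] at h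
      have h2 : Fintype.card (Pt m) = 3 * m := by
        rw [Fintype.card_prod, ZMod.card, ZMod.card]
        ring
      rw [h2] at h
      have : Fintype.card {x : Pt m // x ≠ v₀} = Fintype.card {x : Pt m // ¬x = v₀} := rfl
      rw [this, h]
      omega
    exact build_design (Fintype.equivFinOfCardEq hcard) (Mdel S v₀) (Rdel S v₀)
      (hMdel2 S v₀) (hMdelcov S v₀ hS3 hScov) (hRdel3 S v₀ hS3) (hdelcov S v₀ hS3 hScov)
end

section
/- If there exists an (n,r)-pairs-triples design with 1 ≤ r < n−1, then there exists a (2n, n+r)-pairs-triples design. -/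
namespace Stmt18Aux

def loE (n : ℕ) : Fin n ↪ Fin (2 * n) :=
  ⟨fun a => ⟨a.1, by have := a.2; omega⟩, fun a b h => by
    simp only [Fin.mk.injEq] at h
    exact Fin.ext h⟩

def hiE (n : ℕ) : Fin n ↪ Fin (2 * n) :=
  ⟨fun a => ⟨n + a.1, by have := a.2; omega⟩, fun a b h => by
    simp only [Fin.mk.injEq] at h
    exact Fin.ext (by omega)⟩

@[simp] lemma loE_val {n : ℕ} (a : Fin n) : (loE n a).1 = a.1 := rfl
@[simp] lemma hiE_val {n : ℕ} (a : Fin n) : (hiE n a).1 = n + a.1 := rfl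

lemma lo_ne_hi {n : ℕ} (a b : Fin n) : loE n a ≠ hiE n b := fun h => by
  have h1 : a.1 = n + b.1 := congrArg Fin.val h
  have := a.2; omega

lemma lo_mem_lt {n : ℕ} {q : Finset (Fin n)} {x : Fin (2 * n)}
    (h : x ∈ q.map (loE n)) : x.1 < n := by
  obtain ⟨a, -, rfl⟩ := Finset.mem_map.1 h; exact a.2

lemma hi_mem_le {n : ℕ} {q : Finset (Fin n)} {x : Fin (2 * n)}
    (h : x ∈ q.map (hiE n)) : n ≤ x.1 := by
  obtain ⟨a, -, rfl⟩ := Finset.mem_map.1 h; exact Nat.le_add_right n a.1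

def crossF (n : ℕ) (k : Fin n) : Set (Finset (Fin (2 * n))) :=
  { p | ∃ a : Fin n, p = {loE n a, hiE n (a + k)} }

def liftSet (n : ℕ) (S : Set (Finset (Fin n))) : Set (Finset (Fin (2 * n))) :=
  { p | ∃ q ∈ S, p = q.map (loE n) ∨ p = q.map (hiE n) }

def bigT (n r : ℕ) (T : Fin r → Set (Finset (Fin n))) :
    Fin (n + r) → Set (Finset (Fin (2 * n))) := fun i =>
  if h : (i : ℕ) < r then liftSet n (T ⟨i, h⟩)
  else crossF n ⟨(i : ℕ) - r, by have := i.2; omega⟩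

lemma pair_map {α β : Type*} [DecidableEq α] [DecidableEq β] (e : α ↪ β) (a b : α) :
    ({a, b} : Finset α).map e = {e a, e b} := by
  simp [Finset.map_insert]

lemma bigT_lift_eq {n r : ℕ} (T : Fin r → Set (Finset (Fin n))) (j : Fin (n + r))
    (hj : (j : ℕ) < r) (i : Fin r) (hi : (j : ℕ) = i.1) :
    bigT n r T j = liftSet n (T i) := by
  unfold bigT
  rw [dif_pos hj]
  have : (⟨(j : ℕ), hj⟩ : Fin r) = i := Fin.ext hi
  rw [this]

lemma bigT_cross_eq {n r : ℕ} (T : Fin r → Set (Finset (Fin n))) (j : Fin (n + r))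
    (hj : ¬ (j : ℕ) < r) (k : Fin n) (hk : (j : ℕ) = r + k.1) :
    bigT n r T j = crossF n k := by
  unfold bigT
  rw [dif_neg hj]
  refine congrArg (crossF n) (Fin.ext ?_)
  show (j : ℕ) - r = (k : ℕ)
  omega

lemma crossF_pair_eq {n : ℕ} [NeZero n] {a b k : Fin n}
    (h : ({loE n a, hiE n b} : Finset (Fin (2 * n))) ∈ crossF n k) : k = b - a := by
  obtain ⟨a', hpa⟩ := h
  have hxm : loE n a ∈ ({loE n a', hiE n (a' + k)} : Finset (Fin (2 * n))) := hpa ▸ (by simp)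
  have haa : a = a' := by
    rcases Finset.mem_insert.1 hxm with h | h
    · exact (loE n).injective h
    · exact absurd (Finset.mem_singleton.1 h) (lo_ne_hi _ _)
  have hym : hiE n b ∈ ({loE n a', hiE n (a' + k)} : Finset (Fin (2 * n))) := hpa ▸ (by simp)
  have hbb : b = a' + k := by
    rcases Finset.mem_insert.1 hym with h | h
    · exact absurd h.symm (lo_ne_hi _ _)
    · exact (hiE n).injective (Finset.mem_singleton.1 h)
  rw [hbb, ← haa]
  abel

lemma liftSet_isOneFactor {n : ℕ} {S : Set (Finset (Fin n))} (hS : IsOneFactor n S) :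
    IsOneFactor (2 * n) (liftSet n S) := by
  constructor
  · rintro p ⟨q, hq, (rfl | rfl)⟩ <;> rw [Finset.card_map] <;> exact hS.1 q hq
  · intro v
    rcases lt_or_ge v.1 n with hv | hv
    · obtain ⟨a, rfl⟩ : ∃ a, v = loE n a := ⟨⟨v.1, hv⟩, Fin.ext rfl⟩
      obtain ⟨q, ⟨hq, haq⟩, huniq⟩ := hS.2 a
      refine ⟨q.map (loE n), ⟨⟨q, hq, Or.inl rfl⟩, Finset.mem_map_of_mem _ haq⟩, ?_⟩
      rintro p ⟨⟨q', hq', (rfl | rfl)⟩, hvm⟩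
      · obtain ⟨a', ha', he⟩ := Finset.mem_map.1 hvm
        have ha : a' = a := (loE n).injective he
        rw [huniq q' ⟨hq', ha ▸ ha'⟩]
      · have h1 := hi_mem_le hvm
        have := a.2; simp only [loE_val, hiE_val] at h1; omega
    · obtain ⟨a, rfl⟩ : ∃ a, v = hiE n a :=
        ⟨⟨v.1 - n, by have := v.2; omega⟩, Fin.ext (show v.1 = n + (v.1 - n) by omega)⟩
      obtain ⟨q, ⟨hq, haq⟩, huniq⟩ := hS.2 a
      refine ⟨q.map (hiE n), ⟨⟨q, hq, Or.inr rfl⟩, Finset.mem_map_of_mem _ haq⟩, ?_⟩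
      rintro p ⟨⟨q', hq', (rfl | rfl)⟩, hvm⟩
      · have h1 := lo_mem_lt hvm
        simp only [loE_val, hiE_val] at h1; omega
      · obtain ⟨a', ha', he⟩ := Finset.mem_map.1 hvm
        have ha : a' = a := (hiE n).injective he
        rw [huniq q' ⟨hq', ha ▸ ha'⟩]

lemma crossF_isOneFactor {n : ℕ} [NeZero n] (k : Fin n) :
    IsOneFactor (2 * n) (crossF n k) := by
  constructor
  · rintro p ⟨a, rfl⟩; exact Finset.card_pair (lo_ne_hi _ _)
  · intro v
    rcases lt_or_ge v.1 n with hv | hv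
    · obtain ⟨a, rfl⟩ : ∃ a, v = loE n a := ⟨⟨v.1, hv⟩, Fin.ext rfl⟩
      refine ⟨{loE n a, hiE n (a + k)}, ⟨⟨a, rfl⟩, by simp⟩, ?_⟩
      rintro p ⟨⟨a', rfl⟩, hvm⟩
      rcases Finset.mem_insert.1 hvm with h | h
      · obtain rfl := (loE n).injective h
        rfl
      · exact absurd (Finset.mem_singleton.1 h) (lo_ne_hi _ _)
    · obtain ⟨b, rfl⟩ : ∃ b, v = hiE n b :=
        ⟨⟨v.1 - n, by have := v.2; omega⟩, Fin.ext (show v.1 = n + (v.1 - n) by omega)⟩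
      have hbk : b - k + k = b := sub_add_cancel b k
      refine ⟨{loE n (b - k), hiE n (b - k + k)}, ⟨⟨b - k, rfl⟩, by simp [hbk]⟩, ?_⟩
      rintro p ⟨⟨a', rfl⟩, hvm⟩
      rcases Finset.mem_insert.1 hvm with h | h
      · exact absurd h.symm (lo_ne_hi _ _)
      · have hb : b = a' + k := (hiE n).injective (Finset.mem_singleton.1 h)
        have ha' : a' = b - k := eq_sub_of_add_eq hb.symm
        rw [ha']

lemma liftSet_disjoint {n : ℕ} {S S' : Set (Finset (Fin n))}
    (h2 : ∀ q ∈ S, q.card = 2) (hd : Disjoint S S') :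
    Disjoint (liftSet n S) (liftSet n S') := by
  rw [Set.disjoint_left]
  rintro p ⟨q, hq, hs⟩ ⟨q', hq', hs'⟩
  obtain ⟨z, hz⟩ : q.Nonempty := Finset.card_pos.1 (by rw [h2 q hq]; omega)
  rcases hs with rfl | rfl <;> rcases hs' with h | h
  · exact Set.disjoint_left.1 hd hq ((Finset.map_injective (loE n) h) ▸ hq')
  · have h1 := hi_mem_le (h ▸ Finset.mem_map_of_mem (loE n) hz)
    have := z.2; simp only [loE_val, hiE_val] at h1; omega
  · have h1 := lo_mem_lt (h ▸ Finset.mem_map_of_mem (hiE n) hz)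
    simp only [loE_val, hiE_val] at h1; omega
  · exact Set.disjoint_left.1 hd hq ((Finset.map_injective (hiE n) h) ▸ hq')

lemma liftSet_crossF_disjoint {n : ℕ} (S : Set (Finset (Fin n))) (k : Fin n) :
    Disjoint (liftSet n S) (crossF n k) := by
  rw [Set.disjoint_left]
  rintro p ⟨q, hq, hs⟩ ⟨a, rfl⟩
  rcases hs with h | h
  · have h1 := lo_mem_lt (h ▸ (show hiE n (a + k) ∈ ({loE n a, hiE n (a + k)} : Finset _) by simp))
    exact Nat.not_lt.2 (Nat.le_add_right n _) h1
  · have h1 := hi_mem_le (h ▸ (show loE n a ∈ ({loE n a, hiE n (a + k)} : Finset _) by simp))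
    have := a.2; simp only [loE_val, hiE_val] at h1; omega

lemma crossF_disjoint {n : ℕ} [NeZero n] {k k' : Fin n} (hkk' : k ≠ k') :
    Disjoint (crossF n k) (crossF n k') := by
  rw [Set.disjoint_left]
  rintro p ⟨a, rfl⟩ ⟨a', heq⟩
  have h1 : loE n a ∈ ({loE n a', hiE n (a' + k')} : Finset _) := heq ▸ by simp
  rcases Finset.mem_insert.1 h1 with h | h
  · obtain rfl := (loE n).injective h
    have h2 : hiE n (a + k) ∈ ({loE n a, hiE n (a + k')} : Finset _) := heq ▸ by simp
    rcases Finset.mem_insert.1 h2 with h' | h'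
    · exact lo_ne_hi _ _ h'.symm
    · exact hkk' (add_left_cancel ((hiE n).injective (Finset.mem_singleton.1 h')))
  · exact lo_ne_hi _ _ (Finset.mem_singleton.1 h)

lemma same_side {n r : ℕ} {T : Fin r → Set (Finset (Fin n))} {R : Set (Finset (Fin n))}
    (hcov : ∀ p : Finset (Fin n), p.card = 2 →
      ((∃! i, p ∈ T i) ∧ ¬∃ b ∈ R, p ⊆ b) ∨ ((∀ i, p ∉ T i) ∧ ∃! b, b ∈ R ∧ p ⊆ b))
    (e e' : Fin n ↪ Fin (2 * n)) (P : Fin (2 * n) → Prop)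
    (hee' : ∀ S : Set (Finset (Fin n)),
      liftSet n S = {p | ∃ q ∈ S, p = q.map e ∨ p = q.map e'})
    (hP : ∀ (q : Finset (Fin n)) (x : Fin (2 * n)), x ∈ q.map e → P x)
    (hP' : ∀ (q : Finset (Fin n)) (x : Fin (2 * n)), x ∈ q.map e' → ¬ P x)
    (hcross : ∀ k a : Fin n, ∃ z ∈ ({loE n a, hiE n (a + k)} : Finset (Fin (2 * n))), ¬ P z)
    {a b : Fin n} (hab : a ≠ b) :
    ((∃! i, (({a, b} : Finset (Fin n)).map e) ∈ bigT n r T i) ∧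
        ¬∃ c ∈ liftSet n R, (({a, b} : Finset (Fin n)).map e) ⊆ c) ∨
      ((∀ i, (({a, b} : Finset (Fin n)).map e) ∉ bigT n r T i) ∧
        ∃! c, c ∈ liftSet n R ∧ (({a, b} : Finset (Fin n)).map e) ⊆ c) := by
  set q : Finset (Fin n) := {a, b} with hqdef
  have hq2 : q.card = 2 := Finset.card_pair hab
  have haq : a ∈ q := by simp [hqdef]
  have hmemT : ∀ j : Fin (n + r), q.map e ∈ bigT n r T j → ∃ hj : (j : ℕ) < r, q ∈ T ⟨j, hj⟩ := by
    intro j hjmem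
    unfold bigT at hjmem
    split_ifs at hjmem with hj
    · rw [hee'] at hjmem
      obtain ⟨q', hq', hside⟩ := hjmem
      rcases hside with h1 | h2
      · exact ⟨hj, (Finset.map_injective e h1.symm) ▸ hq'⟩
      · exact absurd (hP q (e a) (Finset.mem_map_of_mem e haq))
          (hP' q' (e a) (h2 ▸ Finset.mem_map_of_mem e haq))
    · obtain ⟨a', hpa⟩ := hjmem
      obtain ⟨z, hz, hnPz⟩ := hcross _ a'
      exact absurd (hP q z (hpa ▸ hz)) hnPz
  rcases hcov q hq2 with ⟨⟨i, hi, hiu⟩, hnt⟩ | ⟨hno, c, ⟨hcR, hqc⟩, hcu⟩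
  · refine Or.inl ⟨⟨⟨i.1, by omega⟩, ?_, ?_⟩, ?_⟩
    · show Finset.map e q ∈ bigT n r T ⟨i.1, by omega⟩
      rw [bigT_lift_eq T ⟨i.1, by omega⟩ i.2 i rfl, hee']
      exact ⟨q, hi, Or.inl rfl⟩
    · intro j hj
      obtain ⟨hjlt, hjq⟩ := hmemT j hj
      have := hiu ⟨j, hjlt⟩ hjq
      have hv : (j : ℕ) = (i : ℕ) := congrArg Fin.val this
      exact Fin.ext hv
    · rintro ⟨c', hc', hsub⟩
      rw [hee'] at hc'
      obtain ⟨c, hcR, (rfl | rfl)⟩ := hc'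
      · exact hnt ⟨c, hcR, Finset.map_subset_map.1 hsub⟩
      · exact hP' c (e a) (hsub (Finset.mem_map_of_mem e haq)) (hP q (e a) (Finset.mem_map_of_mem e haq))
  · refine Or.inr ⟨?_, c.map e, ⟨?_, Finset.map_subset_map.2 hqc⟩, ?_⟩
    · intro j hj
      obtain ⟨hjlt, hjq⟩ := hmemT j hj
      exact hno ⟨j, hjlt⟩ hjq
    · rw [hee']; exact ⟨c, hcR, Or.inl rfl⟩
    · rintro c' ⟨hc', hsub⟩
      rw [hee'] at hc'
      obtain ⟨c'', hc'', (rfl | rfl)⟩ := hc'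
      · rw [hcu c'' ⟨hc'', Finset.map_subset_map.1 hsub⟩]
      · exact absurd (hP q (e a) (Finset.mem_map_of_mem e haq))
          (hP' c'' (e a) (hsub (Finset.mem_map_of_mem e haq)))

lemma mixed {n r : ℕ} [NeZero n] (T : Fin r → Set (Finset (Fin n)))
    (R : Set (Finset (Fin n))) {x y : Fin (2 * n)} (hx : x.1 < n) (hy : n ≤ y.1) :
    (∃! i, ({x, y} : Finset (Fin (2 * n))) ∈ bigT n r T i) ∧
      ¬∃ c ∈ liftSet n R, ({x, y} : Finset (Fin (2 * n))) ⊆ c := by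
  obtain ⟨a, rfl⟩ : ∃ a, x = loE n a := ⟨⟨x.1, hx⟩, Fin.ext rfl⟩
  obtain ⟨b, rfl⟩ : ∃ b, y = hiE n b :=
    ⟨⟨y.1 - n, by have := y.2; omega⟩, Fin.ext (show y.1 = n + (y.1 - n) by omega)⟩
  set k : Fin n := b - a with hkdef
  have hk : a + k = b := by rw [hkdef]; abel
  have hlt : r + k.1 < n + r := by have := k.2; omega
  have hnotlt : ¬ ((⟨r + k.1, hlt⟩ : Fin (n + r)) : ℕ) < r := Nat.not_lt.2 (Nat.le_add_right r k.1)
  constructor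
  · refine ⟨⟨r + k.1, hlt⟩, ?_, ?_⟩
    · show ({loE n a, hiE n b} : Finset (Fin (2 * n))) ∈ bigT n r T ⟨r + k.1, hlt⟩
      rw [bigT_cross_eq T ⟨r + k.1, hlt⟩ hnotlt k rfl]
      exact ⟨a, by rw [hk]⟩
    · intro j hj
      unfold bigT at hj
      split_ifs at hj with hjr
      · obtain ⟨q', hq', hside⟩ := hj
        rcases hside with h1 | h2
        · have h3 := lo_mem_lt (h1 ▸ (show hiE n b ∈ ({loE n a, hiE n b} : Finset _) by simp))
          simp only [loE_val, hiE_val] at h3; omega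
        · have h3 := hi_mem_le (h2 ▸ (show loE n a ∈ ({loE n a, hiE n b} : Finset _) by simp))
          have := a.2; simp only [loE_val, hiE_val] at h3; omega
      · have hke := crossF_pair_eq hj
        rw [← hkdef] at hke
        have hv : (j : ℕ) - r = (k : ℕ) := congrArg Fin.val hke
        exact Fin.ext (show (j : ℕ) = r + (k : ℕ) by omega)
  · rintro ⟨c', hc', hsub⟩
    obtain ⟨c, hcR, (rfl | rfl)⟩ := hc'
    · have h3 := lo_mem_lt (hsub (show hiE n b ∈ ({loE n a, hiE n b} : Finset _) by simp))
      simp only [loE_val, hiE_val] at h3; omega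
    · have h3 := hi_mem_le (hsub (show loE n a ∈ ({loE n a, hiE n b} : Finset _) by simp))
      have := a.2; simp only [loE_val, hiE_val] at h3; omega

end Stmt18Aux

open Stmt18Aux

theorem stmt18 {n r : ℕ} (hr1 : 1 ≤ r) (hr2 : r < n - 1)
    (h : ∃ (T : Fin r → Set (Finset (Fin n))) (R : Set (Finset (Fin n))),
        IsPairsTriplesDesign n r T R) :
    ∃ (T' : Fin (n + r) → Set (Finset (Fin (2 * n)))) (R' : Set (Finset (Fin (2 * n)))),
      IsPairsTriplesDesign (2 * n) (n + r) T' R' := by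
  obtain ⟨T, R, hfac, hdisj, htri, hcov⟩ := h
  haveI : NeZero n := ⟨by omega⟩
  refine ⟨bigT n r T, liftSet n R, ?_, ?_, ?_, ?_⟩
  · intro i
    unfold bigT
    split_ifs with hi
    · exact liftSet_isOneFactor (hfac _)
    · exact crossF_isOneFactor _
  · intro i j hij
    unfold bigT
    split_ifs with hi hj hj
    · refine liftSet_disjoint (hfac _).1 (hdisj _ _ ?_)
      intro hEq
      simp only [Fin.mk.injEq] at hEq
      exact hij (Fin.ext hEq)
    · exact liftSet_crossF_disjoint _ _
    · exact (liftSet_crossF_disjoint _ _).symm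
    · refine crossF_disjoint ?_
      intro hEq
      simp only [Fin.mk.injEq] at hEq
      exact hij (Fin.ext (by omega))
  · rintro b ⟨c, hc, (rfl | rfl)⟩ <;> rw [Finset.card_map] <;> exact htri c hc
  · intro p hp
    obtain ⟨x, y, hxy, rfl⟩ := Finset.card_eq_two.1 hp
    rcases lt_or_ge x.1 n with hx | hx <;> rcases lt_or_ge y.1 n with hy | hy
    · obtain ⟨a, rfl⟩ : ∃ a, x = loE n a := ⟨⟨x.1, hx⟩, Fin.ext rfl⟩
      obtain ⟨b, rfl⟩ : ∃ b, y = loE n b := ⟨⟨y.1, hy⟩, Fin.ext rfl⟩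
      have hab : a ≠ b := fun hEq => hxy (by rw [hEq])
      rw [show ({loE n a, loE n b} : Finset (Fin (2 * n)))
            = ({a, b} : Finset (Fin n)).map (loE n) from (pair_map _ _ _).symm]
      refine same_side hcov (loE n) (hiE n) (fun z => z.1 < n) (fun S => rfl)
        (fun q x hq => lo_mem_lt hq)
        (fun q x hq => by have := hi_mem_le hq; omega)
        (fun k a => ⟨hiE n (a + k), by simp, Nat.not_lt.2 (Nat.le_add_right n _)⟩) hab
    · exact Or.inl (mixed T R hx hy)
    · rw [Finset.pair_comm]
      exact Or.inl (mixed T R hy hx)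
    · obtain ⟨a, rfl⟩ : ∃ a, x = hiE n a :=
        ⟨⟨x.1 - n, by have := x.2; omega⟩, Fin.ext (show x.1 = n + (x.1 - n) by omega)⟩
      obtain ⟨b, rfl⟩ : ∃ b, y = hiE n b :=
        ⟨⟨y.1 - n, by have := y.2; omega⟩, Fin.ext (show y.1 = n + (y.1 - n) by omega)⟩
      have hab : a ≠ b := fun hEq => hxy (by rw [hEq])
      rw [show ({hiE n a, hiE n b} : Finset (Fin (2 * n)))
            = ({a, b} : Finset (Fin n)).map (hiE n) from (pair_map _ _ _).symm]
      refine same_side hcov (hiE n) (loE n) (fun z => n ≤ z.1)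
        (fun S => Set.ext fun p => ⟨fun ⟨q, hq, hor⟩ => ⟨q, hq, hor.symm⟩,
          fun ⟨q, hq, hor⟩ => ⟨q, hq, hor.symm⟩⟩)
        (fun q x hq => hi_mem_le hq)
        (fun q x hq => by have := lo_mem_lt hq; omega)
        (fun k a => ⟨loE n a, by simp, by have := a.2; simp only [loE_val]; omega⟩) hab
end
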